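/- arXiv:2005.01097 — 10 statements merged into one kernel-verified Lean document; each statement's English description precedes it below -/
import Mathlib

section
/- Let H be a real inner product space, let n ≥ 2 and let a_1, …, a_n ∈ H, and let τ be an integer with 1 ≤ τ ≤ n. Then the average of ‖Σ_{i∈S} a_i‖² over all subsets S ⊆ {1,…,n} of cardinality τ equals (τ(τ−1)/(n(n−1)))·‖Σ_{i=1}^n a_i‖² + (τ(n−τ)/(n(n−1)))·Σ_{i=1}^n ‖a_i‖²; that is, binom(n,τ)^{-1} Σ_{S⊆{1,…,n}, |S|=τ} ‖Σ_{i∈S} a_i‖² = (τ(τ−1)/(n(n−1)))‖Σ_i a_i‖² + (τ(n−τ)/(n(n−1)))Σ_i ‖a_i‖². -/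
open Finset

open RealInnerProductSpace

lemma aux_count {α : Type*} [DecidableEq α] {s t : Finset α} {τ : ℕ} (hts : t ⊆ s)
    (h : t.card ≤ τ) :
    ((Finset.powersetCard τ s).filter (fun S => t ⊆ S)).card
      = (s.card - t.card).choose (τ - t.card) := by
  rw [show s.card - t.card = (s \ t).card from (Finset.card_sdiff_of_subset hts).symm,
    ← Finset.card_powersetCard]
  apply Finset.card_bij (fun S _ => S \ t)
  · intro S hS
    simp only [Finset.mem_filter, Finset.mem_powersetCard] at hS
    obtain ⟨⟨hSs, hScard⟩, htS⟩ := hS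
    rw [Finset.mem_powersetCard]
    exact ⟨Finset.sdiff_subset_sdiff hSs le_rfl, by rw [Finset.card_sdiff_of_subset htS, hScard]⟩
  · intro S1 h1 S2 h2 heq
    simp only [Finset.mem_filter] at h1 h2
    have e1 := Finset.sdiff_union_of_subset h1.2
    have e2 := Finset.sdiff_union_of_subset h2.2
    rw [← e1, ← e2, heq]
  · intro S' hS'
    rw [Finset.mem_powersetCard] at hS'
    obtain ⟨hsub, hcard⟩ := hS'
    have hdisj : Disjoint S' t := Finset.disjoint_of_subset_left hsub Finset.sdiff_disjoint
    refine ⟨S' ∪ t, ?_, ?_⟩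
    · simp only [Finset.mem_filter, Finset.mem_powersetCard]
      refine ⟨⟨Finset.union_subset (hsub.trans Finset.sdiff_subset) hts, ?_⟩,
        Finset.subset_union_right⟩
      rw [Finset.card_union_of_disjoint hdisj, hcard, Nat.sub_add_cancel h]
    · rw [Finset.union_sdiff_cancel_right hdisj]

/-- Second-moment identity for τ-nice sampling: the average of `‖∑ i ∈ S, a i‖²`
over all subsets `S` of `{1,…,n}` of cardinality `τ`. -/
theorem stmt0 {H : Type*} [NormedAddCommGroup H] [InnerProductSpace ℝ H]
    (n : ℕ) (hn : 2 ≤ n) (a : Fin n → H) (τ : ℕ) (hτ1 : 1 ≤ τ) (hτn : τ ≤ n) :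
    (n.choose τ : ℝ)⁻¹ *
        ∑ S ∈ Finset.powersetCard τ (Finset.univ : Finset (Fin n)),
          ‖∑ i ∈ S, a i‖ ^ 2 =
      (τ : ℝ) * ((τ : ℝ) - 1) / ((n : ℝ) * ((n : ℝ) - 1)) * ‖∑ i, a i‖ ^ 2 +
        (τ : ℝ) * ((n : ℝ) - (τ : ℝ)) / ((n : ℝ) * ((n : ℝ) - 1)) *
          ∑ i, ‖a i‖ ^ 2 := by
  classical
  set P := Finset.powersetCard τ (Finset.univ : Finset (Fin n)) with hP
  set g : Fin n → Fin n → ℝ := fun i j => ⟪a i, a j⟫ with hg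
  set C : ℝ := (n.choose τ : ℝ) with hC
  have hn0 : (n : ℝ) ≠ 0 := by positivity
  have hn1 : (n : ℝ) - 1 ≠ 0 := by
    have : (2 : ℝ) ≤ (n : ℝ) := by exact_mod_cast hn
    linarith
  have hC0 : C ≠ 0 := by
    have := Nat.choose_pos hτn
    simp only [hC]
    exact_mod_cast this.ne'
  -- expansion of squared norm
  have expand : ∀ S : Finset (Fin n), ‖∑ i ∈ S, a i‖ ^ 2 = ∑ i ∈ S, ∑ j ∈ S, g i j := by
    intro S
    rw [← real_inner_self_eq_norm_sq, sum_inner]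
    exact Finset.sum_congr rfl fun i _ => inner_sum _ _ _
  -- step 1 : swap sums
  have step1 : ∑ S ∈ P, ‖∑ i ∈ S, a i‖ ^ 2
      = ∑ i, ∑ j, ((P.filter (fun S => i ∈ S ∧ j ∈ S)).card : ℝ) * g i j := by
    calc ∑ S ∈ P, ‖∑ i ∈ S, a i‖ ^ 2
        = ∑ S ∈ P, ∑ i, ∑ j, (if i ∈ S ∧ j ∈ S then g i j else 0) := by
          refine Finset.sum_congr rfl fun S _ => ?_
          rw [expand S]
          symm
          calc ∑ i, ∑ j, (if i ∈ S ∧ j ∈ S then g i j else 0)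
              = ∑ i, (if i ∈ S then ∑ j, (if j ∈ S then g i j else 0) else 0) := by
                refine Finset.sum_congr rfl fun i _ => ?_
                by_cases hi : i ∈ S <;> simp [hi]
            _ = ∑ i ∈ S, ∑ j ∈ S, g i j := by
                rw [Finset.sum_ite_mem, Finset.univ_inter]
                exact Finset.sum_congr rfl fun i _ => by
                  rw [Finset.sum_ite_mem, Finset.univ_inter]
      _ = ∑ i, ∑ j, ∑ S ∈ P, (if i ∈ S ∧ j ∈ S then g i j else 0) := by
          rw [Finset.sum_comm]
          exact Finset.sum_congr rfl fun i _ => Finset.sum_comm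
      _ = ∑ i, ∑ j, ((P.filter (fun S => i ∈ S ∧ j ∈ S)).card : ℝ) * g i j := by
          refine Finset.sum_congr rfl fun i _ => Finset.sum_congr rfl fun j _ => ?_
          rw [← Finset.sum_filter, Finset.sum_const, nsmul_eq_mul]
  -- the two counting facts
  have key1 : ∀ i : Fin n, ((P.filter (fun S => i ∈ S ∧ i ∈ S)).card : ℝ)
      = C * ((τ : ℝ) / n) := by
    intro i
    have hcard : (P.filter (fun S => i ∈ S ∧ i ∈ S)).card = (n - 1).choose (τ - 1) := by
      rw [Finset.filter_congr (fun S _ => by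
        simp [Finset.singleton_subset_iff] :
        ∀ S ∈ P, ((i ∈ S ∧ i ∈ S) ↔ ({i} : Finset (Fin n)) ⊆ S)), hP,
        aux_count (by simp) (by simpa using hτ1)]
      simp
    rw [hcard]
    obtain ⟨m, rfl⟩ : ∃ m, n = m + 1 := ⟨n - 1, by omega⟩
    obtain ⟨t, rfl⟩ : ∃ t, τ = t + 1 := ⟨τ - 1, by omega⟩
    have e1 : (m + 1) * m.choose t = (m + 1).choose (t + 1) * (t + 1) :=
      Nat.add_one_mul_choose_eq m t
    have e1' : ((m : ℝ) + 1) * (m.choose t : ℝ)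
        = ((m + 1).choose (t + 1) : ℝ) * ((t : ℝ) + 1) := by exact_mod_cast e1
    simp only [hC, Nat.add_sub_cancel]
    push_cast
    field_simp
    linear_combination e1'
  have key2 : ∀ i j : Fin n, i ≠ j → ((P.filter (fun S => i ∈ S ∧ j ∈ S)).card : ℝ)
      = C * ((τ : ℝ) * ((τ : ℝ) - 1) / ((n : ℝ) * ((n : ℝ) - 1))) := by
    intro i j hij
    rcases Nat.lt_or_ge τ 2 with h2 | h2
    · have hτ : τ = 1 := by omega
      subst hτ
      have hemp : P.filter (fun S => i ∈ S ∧ j ∈ S) = ∅ := by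
        rw [Finset.filter_eq_empty_iff]
        intro S hS
        rw [hP, Finset.mem_powersetCard] at hS
        rintro ⟨hi, hj⟩
        have := Finset.one_lt_card.mpr ⟨i, hi, j, hj, hij⟩
        omega
      rw [hemp]
      simp
    · have hcard : (P.filter (fun S => i ∈ S ∧ j ∈ S)).card = (n - 2).choose (τ - 2) := by
        rw [Finset.filter_congr (fun S _ => by
          simp [Finset.insert_subset_iff] :
          ∀ S ∈ P, ((i ∈ S ∧ j ∈ S) ↔ ({i, j} : Finset (Fin n)) ⊆ S)), hP,
          aux_count (by simp) (by rw [Finset.card_pair hij]; omega)]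
        simp [Finset.card_pair hij]
      rw [hcard]
      obtain ⟨m, rfl⟩ : ∃ m, n = m + 2 := ⟨n - 2, by omega⟩
      obtain ⟨t, rfl⟩ : ∃ t, τ = t + 2 := ⟨τ - 2, by omega⟩
      have e1 : (m + 1) * m.choose t = (m + 1).choose (t + 1) * (t + 1) :=
        Nat.add_one_mul_choose_eq m t
      have e2 : (m + 2) * (m + 1).choose (t + 1) = (m + 2).choose (t + 2) * (t + 2) :=
        Nat.add_one_mul_choose_eq (m + 1) (t + 1)
      have e3 : (m + 2) * (m + 1) * m.choose t = (m + 2).choose (t + 2) * ((t + 2) * (t + 1)) := by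
        calc (m + 2) * (m + 1) * m.choose t = (m + 2) * ((m + 1) * m.choose t) := by ring
          _ = (m + 2) * ((m + 1).choose (t + 1) * (t + 1)) := by rw [e1]
          _ = ((m + 2) * (m + 1).choose (t + 1)) * (t + 1) := by ring
          _ = ((m + 2).choose (t + 2) * (t + 2)) * (t + 1) := by rw [e2]
          _ = _ := by ring
      have e3' : ((m : ℝ) + 2) * ((m : ℝ) + 1) * (m.choose t : ℝ)
          = ((m + 2).choose (t + 2) : ℝ) * (((t : ℝ) + 2) * ((t : ℝ) + 1)) := by
        exact_mod_cast e3
      simp only [hC, Nat.add_sub_cancel]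
      push_cast
      rw [show ((m : ℝ) + 2) - 1 = (m : ℝ) + 1 by ring,
        show ((t : ℝ) + 2) - 1 = (t : ℝ) + 1 by ring]
      have hm2 : (m : ℝ) + 2 ≠ 0 := by positivity
      have hm1 : (m : ℝ) + 1 ≠ 0 := by positivity
      field_simp
      linear_combination e3'
  -- split the double sum
  set A : ℝ := C * ((τ : ℝ) * ((τ : ℝ) - 1) / ((n : ℝ) * ((n : ℝ) - 1))) with hA
  set B : ℝ := C * ((τ : ℝ) / n) with hB
  have pt : ∀ i j : Fin n, ((P.filter (fun S => i ∈ S ∧ j ∈ S)).card : ℝ) * g i j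
      = A * g i j + (if i = j then (B - A) * g i j else 0) := by
    intro i j
    by_cases hij : i = j
    · subst hij
      rw [key1 i, if_pos rfl]
      ring
    · rw [key2 i j hij, if_neg hij]
      ring
  have step2 : ∑ i, ∑ j, ((P.filter (fun S => i ∈ S ∧ j ∈ S)).card : ℝ) * g i j
      = A * (∑ i, ∑ j, g i j) + (B - A) * ∑ i, g i i := by
    simp_rw [pt, Finset.sum_add_distrib, ← Finset.mul_sum, Finset.sum_ite_eq,
      Finset.mem_univ, if_true]
    rw [← Finset.mul_sum]
  have hX : ∑ i, ∑ j, g i j = ‖∑ i, a i‖ ^ 2 := (expand Finset.univ).symm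
  have hY : ∀ i : Fin n, g i i = ‖a i‖ ^ 2 := fun i => real_inner_self_eq_norm_sq _
  rw [step1, step2, hX]
  simp_rw [hY]
  rw [hA, hB]
  field_simp
  ring
end

section
/- Expected smoothness bound for τ-partition nice sampling (Lemma 1(i)): assume each f_i is convex and L_i-smooth and each partition average f_{C_j} is L_{C_j}-smooth. Then for all x, y ∈ ℝ^d, Σ_{j=1}^K q_{C_j} · binom(n_{C_j},τ)^{-1} Σ_{S⊆C_j, |S|=τ} ‖(1/n) Σ_{i∈S} (n_{C_j}/(q_{C_j}τ)) (∇f_i(x) − ∇f_i(y))‖² ≤ 2𝓛(τ)·(f(x) − f(y) − ⟨∇f(y), x−y⟩), where 𝓛(τ) = (1/(nτ)) · max_j [n_{C_j}/(q_{C_j}(n_{C_j}−1))] · ((τ−1)·L_{C_j}·n_{C_j} + (n_{C_j}−τ)·max_{i∈C_j} L_i). -/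
/-!
Within a block `A` of size `m`, expanding `‖∑_{i ∈ S} δ_i‖²` and counting the `τ`-subsets `S`
that contain a given index or pair of indices gives the exact second moment of sampling without
replacement:
`m (m - 1) ∑_S ‖∑_{i ∈ S} δ_i‖² = binom(m, τ) (τ (τ - 1) ‖∑_A δ_i‖² + τ (m - τ) ∑_A ‖δ_i‖²)`.
For `δ_i = ∇f_i(x) - ∇f_i(y)`, cocoercivity of `L`-smooth convex functions,
`‖∇h(x) - ∇h(y)‖² ≤ 2 L D_h(x, y)` with `D_h` the Bregman divergence, bounds the first term
through `f_A` and the second through the `f_i`. Bregman divergences are additive, so summing over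
the partition yields `D_f(x, y)`.
-/

open Finset RealInnerProductSpace

section Bregman

variable {E : Type*} [NormedAddCommGroup E] [InnerProductSpace ℝ E]

def bregman (f : E → ℝ) (g : E → E) (x y : E) : ℝ := f x - f y - ⟪g y, x - y⟫

theorem hasGradientAt_sum [CompleteSpace E] {ι : Type*} {s : Finset ι} {f : ι → E → ℝ}
    {g : ι → E} {x : E} (h : ∀ i ∈ s, HasGradientAt (f i) (g i) x) :
    HasGradientAt (fun z => ∑ i ∈ s, f i z) (∑ i ∈ s, g i) x := by
  rw [hasGradientAt_iff_hasFDerivAt, map_sum]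
  exact HasFDerivAt.fun_sum fun i hi => (h i hi).hasFDerivAt

theorem convexOn_sum {ι : Type*} {s : Finset ι} {f : ι → E → ℝ} {t : Set E} (ht : Convex ℝ t)
    (h : ∀ i ∈ s, ConvexOn ℝ t (f i)) : ConvexOn ℝ t (fun z => ∑ i ∈ s, f i z) := by
  simpa only [← Finset.sum_apply] using
    Finset.sum_induction f (ConvexOn ℝ t) (fun _ _ => ConvexOn.add) (convexOn_const 0 ht) h

theorem bregman_sum {ι : Type*} (s : Finset ι) (f : ι → E → ℝ) (g : ι → E → E) (x y : E) :
    bregman (fun z => ∑ i ∈ s, f i z) (fun z => ∑ i ∈ s, g i z) x y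
      = ∑ i ∈ s, bregman (f i) (g i) x y := by
  simp only [bregman, sum_inner, Finset.sum_sub_distrib]

theorem ConvexOn.add_inner_le_of_hasGradientAt [CompleteSpace E] {f : E → ℝ} {g' y : E}
    (hf : ConvexOn ℝ Set.univ f) (hg : HasGradientAt f g' y) (x : E) :
    f y + ⟪g', x - y⟫ ≤ f x := by
  set ℓ : ℝ →ᵃ[ℝ] E := AffineMap.lineMap y x
  have hline : HasDerivAt (f ∘ ℓ) ⟪g', x - y⟫ 0 := by
    have hg0 : HasFDerivAt f (InnerProductSpace.toDual ℝ E g') (ℓ 0) := by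
      simpa [ℓ] using hg.hasFDerivAt
    simpa using hg0.comp_hasDerivAt (0 : ℝ) AffineMap.hasDerivAt_lineMap
  have := (hf.comp_affineMap ℓ).le_slope_of_hasDerivAt
    (Set.mem_univ 0) (Set.mem_univ 1) zero_lt_one hline
  simp [slope_def_field, ℓ] at this
  linarith

theorem ConvexOn.bregman_nonneg [CompleteSpace E] {f : E → ℝ} {g : E → E}
    (hf : ConvexOn ℝ Set.univ f) (hg : ∀ z, HasGradientAt f (g z) z) (x y : E) :
    0 ≤ bregman f g x y := by
  have := hf.add_inner_le_of_hasGradientAt (hg y) x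
  rw [bregman]
  linarith

theorem ConvexOn.bregman_le_inner [CompleteSpace E] {f : E → ℝ} {g : E → E}
    (hf : ConvexOn ℝ Set.univ f) (hg : ∀ z, HasGradientAt f (g z) z) (x y : E) :
    bregman f g x y ≤ ⟪g x - g y, x - y⟫ := by
  have := hf.add_inner_le_of_hasGradientAt (hg x) y
  rw [← neg_sub x y, inner_neg_right] at this
  rw [bregman, inner_sub_left]
  linarith

theorem bregman_le_of_lipschitz [CompleteSpace E] {f : E → ℝ} {g : E → E}
    (hg : ∀ z, HasGradientAt f (g z) z) {L : ℝ} (hL : ∀ u v, ‖g u - g v‖ ≤ L * ‖u - v‖)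
    (u v : E) : bregman f g u v ≤ L / 2 * ‖u - v‖ ^ 2 := by
  set w := u - v
  set ℓ : ℝ →ᵃ[ℝ] E := AffineMap.lineMap v u
  have hℓ : ∀ t : ℝ, ℓ t = v + t • w := fun t => by
    simp [ℓ, AffineMap.lineMap_apply, w, add_comm]
  -- `χ` is the gap between `f` on the segment and its quadratic upper model; the Lipschitz
  -- bound on `g` makes it antitone.
  set χ : ℝ → ℝ := fun t => f (ℓ t) - t * ⟪g v, w⟫ - L / 2 * ‖w‖ ^ 2 * t ^ 2
  have hχ : ∀ t, HasDerivAt χ (⟪g (ℓ t) - g v, w⟫ - L * ‖w‖ ^ 2 * t) t := by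
    intro t
    have hf : HasDerivAt (f ∘ ℓ) ⟪g (ℓ t), w⟫ t := by
      simpa using (hg (ℓ t)).hasFDerivAt.comp_hasDerivAt t AffineMap.hasDerivAt_lineMap
    refine ((hf.sub ((hasDerivAt_id t).mul_const ⟪g v, w⟫)).sub
      (((hasDerivAt_id t).pow 2).const_mul (L / 2 * ‖w‖ ^ 2))).congr_deriv ?_
    simp only [inner_sub_left, id]
    ring
  have hanti : AntitoneOn χ (Set.Icc 0 1) := by
    refine antitoneOn_of_hasDerivWithinAt_nonpos (convex_Icc 0 1)
      (fun t _ => (hχ t).continuousAt.continuousWithinAt) (fun t _ => (hχ t).hasDerivWithinAt) ?_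
    intro t ht
    rw [interior_Icc] at ht
    have hlip : ‖g (ℓ t) - g v‖ ≤ L * (t * ‖w‖) := by
      simpa [hℓ, norm_smul, abs_of_pos ht.1] using hL (ℓ t) v
    have := (real_inner_le_norm _ _).trans (mul_le_mul_of_nonneg_right hlip (norm_nonneg w))
    nlinarith
  have h01 := hanti (Set.left_mem_Icc.mpr zero_le_one) (Set.right_mem_Icc.mpr zero_le_one)
    zero_le_one
  simp only [χ, hℓ, zero_smul, add_zero, one_smul, zero_mul, sub_zero, one_mul, one_pow,
    mul_one] at h01
  rw [bregman]
  simp only [w, add_sub_cancel] at h01 ⊢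
  linarith

theorem ConvexOn.norm_sub_sq_le_two_mul_bregman [CompleteSpace E] {f : E → ℝ} {g : E → E}
    (hf : ConvexOn ℝ Set.univ f) (hg : ∀ z, HasGradientAt f (g z) z) {L : ℝ}
    (hL : ∀ u v, ‖g u - g v‖ ≤ L * ‖u - v‖) (x y : E) :
    ‖g x - g y‖ ^ 2 ≤ 2 * L * bregman f g x y := by
  rcases le_or_gt L 0 with hL0 | hL0
  · have hxy : g x = g y := sub_eq_zero.mp <| norm_le_zero_iff.mp <|
      (hL x y).trans (mul_nonpos_of_nonpos_of_nonneg hL0 (norm_nonneg _))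
    have hle := hf.bregman_le_inner hg x y
    have hge := hf.bregman_nonneg hg x y
    rw [hxy, sub_self, inner_zero_left] at hle
    simp [hxy, le_antisymm hle hge]
  -- Compare `f` at `y` and at the gradient step `w` from `x`: convexity from below, smoothness
  -- from above.
  set Δ := g x - g y
  set w := x - L⁻¹ • Δ
  have hbelow := hf.add_inner_le_of_hasGradientAt (hg y) w
  have habove := bregman_le_of_lipschitz hg hL w x
  have hstep : w - x = -(L⁻¹ • Δ) := by simp [w]
  have hinner : ⟪g y, w - y⟫ - ⟪g x, w - x⟫ = ⟪g y, x - y⟫ + L⁻¹ * ‖Δ‖ ^ 2 := by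
    rw [show w - y = (x - y) + (w - x) by abel, inner_add_right, hstep, inner_neg_right,
      inner_neg_right, real_inner_smul_right, real_inner_smul_right,
      ← real_inner_self_eq_norm_sq, inner_sub_left]
    ring
  have hquad : L / 2 * ‖w - x‖ ^ 2 = L⁻¹ / 2 * ‖Δ‖ ^ 2 := by
    rw [hstep, norm_neg, norm_smul, Real.norm_eq_abs, abs_of_pos (inv_pos.mpr hL0), mul_pow]
    field_simp
  have hkey : L⁻¹ * ‖Δ‖ ^ 2 ≤ 2 * bregman f g x y := by
    rw [bregman] at habove ⊢
    linarith
  calc ‖Δ‖ ^ 2 = L * (L⁻¹ * ‖Δ‖ ^ 2) := by field_simp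
    _ ≤ L * (2 * bregman f g x y) := by gcongr
    _ = _ := by ring

end Bregman

section Sampling

variable {ι : Type*} [DecidableEq ι]

theorem card_filter_powersetCard_mem_mul {A : Finset ι} {i : ι} (hi : i ∈ A) (τ : ℕ) :
    (#{S ∈ A.powersetCard τ | i ∈ S} : ℝ) * #A = (#A).choose τ * τ := by
  obtain ⟨a, ha⟩ : ∃ a, #A = a + 1 := Nat.exists_eq_add_one.mpr (card_pos.mpr ⟨i, hi⟩)
  rcases τ with _ | b
  · simp [filter_singleton]
  have hcount := card_filter_powersetCard_subset {i} A (b + 1) (by simpa using hi) (by simp)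
  simp only [singleton_subset_iff, card_singleton, ha, add_tsub_cancel_right] at hcount
  rw [hcount, ha]
  exact_mod_cast (mul_comm _ _).trans (Nat.add_one_mul_choose_eq a b)

theorem card_filter_powersetCard_mem_and_mem_mul {A : Finset ι} {i k : ι} (hi : i ∈ A)
    (hk : k ∈ A) (hik : i ≠ k) (τ : ℕ) :
    (#{S ∈ A.powersetCard τ | i ∈ S ∧ k ∈ S} : ℝ) * (#A * (#A - 1))
      = (#A).choose τ * (τ * (τ - 1)) := by
  obtain ⟨a, ha⟩ : ∃ a, #A = a + 2 :=
    Nat.exists_eq_add_of_le' (one_lt_card.mpr ⟨i, hi, k, hk, hik⟩)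
  have hpair : #({i, k} : Finset ι) = 2 := card_pair hik
  rcases lt_or_ge τ 2 with hτ | hτ
  · have hempty : {S ∈ A.powersetCard τ | i ∈ S ∧ k ∈ S} = ∅ := by
      refine filter_false_of_mem fun S hS ⟨hiS, hkS⟩ => ?_
      have := card_le_card (insert_subset hiS (singleton_subset_iff.mpr hkS))
      rw [hpair, (mem_powersetCard.mp hS).2] at this
      omega
    interval_cases τ <;> simp [hempty]
  obtain ⟨b, rfl⟩ := Nat.exists_eq_add_of_le' hτ
  have hcount := card_filter_powersetCard_subset {i, k} A (b + 2)
    (insert_subset hi (singleton_subset_iff.mpr hk)) (by omega)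
  simp only [insert_subset_iff, singleton_subset_iff, hpair, ha, add_tsub_cancel_right] at hcount
  rw [hcount, ha]
  have h1 := Nat.add_one_mul_choose_eq (a + 1) (b + 1)
  have h2 := Nat.add_one_mul_choose_eq a b
  have : a.choose b * ((a + 2) * (a + 1)) = (a + 2).choose (b + 2) * ((b + 2) * (b + 1)) := by
    rw [show a.choose b * ((a + 2) * (a + 1)) = (a + 2) * ((a + 1) * a.choose b) by ring, h2,
      ← mul_assoc, h1]
    ring
  have hreal : ((a.choose b * ((a + 2) * (a + 1)) : ℕ) : ℝ)
      = ((a + 2).choose (b + 2) * ((b + 2) * (b + 1)) : ℕ) := congrArg _ this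
  push_cast at hreal ⊢
  linear_combination hreal

variable {E : Type*} [NormedAddCommGroup E] [InnerProductSpace ℝ E]

theorem sum_norm_sq_sum_eq_sum_sum_card_mul_inner (𝒮 : Finset (Finset ι)) {A : Finset ι}
    (h𝒮 : ∀ S ∈ 𝒮, S ⊆ A) (h : ι → E) :
    ∑ S ∈ 𝒮, ‖∑ i ∈ S, h i‖ ^ 2
      = ∑ i ∈ A, ∑ k ∈ A, (#{S ∈ 𝒮 | i ∈ S ∧ k ∈ S} : ℝ) * ⟪h i, h k⟫ := by
  have hexpand : ∀ S ∈ 𝒮, ‖∑ i ∈ S, h i‖ ^ 2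
      = ∑ i ∈ A, ∑ k ∈ A, if i ∈ S ∧ k ∈ S then ⟪h i, h k⟫ else 0 := by
    intro S hS
    have hAS : A.filter (· ∈ S) = S := by rw [filter_mem_eq_inter, inter_eq_right.mpr (h𝒮 S hS)]
    simp only [ite_and, sum_ite_irrel, sum_const_zero, ← sum_filter, hAS]
    rw [← real_inner_self_eq_norm_sq, sum_inner]
    simp only [inner_sum]
  rw [sum_congr rfl hexpand, sum_comm]
  refine sum_congr rfl fun i _ => ?_
  rw [sum_comm]
  refine sum_congr rfl fun k _ => ?_
  rw [← sum_filter, sum_const, nsmul_eq_mul]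

theorem sum_powersetCard_norm_sq_sum (A : Finset ι) (τ : ℕ) (h : ι → E) :
    (#A * (#A - 1) : ℝ) * ∑ S ∈ A.powersetCard τ, ‖∑ i ∈ S, h i‖ ^ 2
      = (#A).choose τ * (τ * (τ - 1)) * ‖∑ i ∈ A, h i‖ ^ 2
        + (#A).choose τ * (τ * (#A - τ)) * ∑ i ∈ A, ‖h i‖ ^ 2 := by
  set C : ℝ := ↑((#A).choose τ)
  rw [sum_norm_sq_sum_eq_sum_sum_card_mul_inner _ (fun S hS => (mem_powersetCard.mp hS).1)]
  calc (#A * (#A - 1) : ℝ) * ∑ i ∈ A, ∑ k ∈ A, (#{S ∈ A.powersetCard τ | i ∈ S ∧ k ∈ S} : ℝ)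
        * ⟪h i, h k⟫
      = ∑ i ∈ A, ∑ k ∈ A, (C * τ * (τ - 1) * ⟪h i, h k⟫
          + if i = k then C * τ * (#A - τ) * ‖h i‖ ^ 2 else 0) := by
        rw [mul_sum]
        refine sum_congr rfl fun i hi => ?_
        rw [mul_sum]
        refine sum_congr rfl fun k hk => ?_
        by_cases hik : i = k
        · subst hik
          simp only [and_self, if_true, real_inner_self_eq_norm_sq]
          linear_combination (#A - 1 : ℝ) * ‖h i‖ ^ 2 * card_filter_powersetCard_mem_mul hi τ
        · rw [if_neg hik, add_zero]
          linear_combination ⟪h i, h k⟫ * card_filter_powersetCard_mem_and_mem_mul hi hk hik τ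
    _ = _ := by
        rw [← real_inner_self_eq_norm_sq (∑ i ∈ A, h i), sum_inner]
        simp only [inner_sum, sum_add_distrib, sum_ite_eq, ← mul_sum, sum_ite_mem, inter_self]
        ring

end Sampling

theorem sum_sum_eq_sum_of_existsUnique_mem {κ ι M : Type*} [Fintype κ] [Fintype ι]
    [AddCommMonoid M] {C : κ → Finset ι} (hC : ∀ i, ∃! j, i ∈ C j) (D : ι → M) :
    ∑ j, ∑ i ∈ C j, D i = ∑ i, D i := by
  classical
  rw [sum_comm' (t' := univ) (s' := fun i => {j | i ∈ C j}) (by simp)]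
  refine sum_congr rfl fun i _ => ?_
  obtain ⟨j, hj, huniq⟩ := hC i
  have hfiber : ({j' | i ∈ C j'} : Finset κ) = {j} :=
    eq_singleton_iff_unique_mem.mpr ⟨by simpa using hj, fun j' hj' => huniq j' (by simpa using hj')⟩
  rw [hfiber, sum_singleton]

section Block

variable {ι E : Type*} [DecidableEq ι] [NormedAddCommGroup E] [InnerProductSpace ℝ E]
  [CompleteSpace E] {f : ι → E → ℝ} {g : ι → E → E}

theorem inv_choose_mul_sum_powersetCard_norm_sq_le (hconv : ∀ i, ConvexOn ℝ Set.univ (f i))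
    (hgrad : ∀ i z, HasGradientAt (f i) (g i z) z) (A : Finset ι) {τ : ℕ} (hA : 2 ≤ #A)
    (hτ : τ ≤ #A) {Λ LA : ℝ} (hΛ : ∀ i ∈ A, ∀ u v, ‖g i u - g i v‖ ≤ Λ * ‖u - v‖)
    (hLA : ∀ u v, ‖(#A : ℝ)⁻¹ • ∑ i ∈ A, g i u - (#A : ℝ)⁻¹ • ∑ i ∈ A, g i v‖ ≤ LA * ‖u - v‖)
    (x y : E) :
    ((#A).choose τ : ℝ)⁻¹ * ∑ S ∈ A.powersetCard τ, ‖∑ i ∈ S, (g i x - g i y)‖ ^ 2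
      ≤ 2 * τ * ((τ - 1) * LA * #A + (#A - τ) * Λ) / (#A * (#A - 1))
        * ∑ i ∈ A, bregman (f i) (g i) x y := by
  have hA' : (2 : ℝ) ≤ #A := by exact_mod_cast hA
  have hτ' : (τ : ℝ) ≤ #A := by exact_mod_cast hτ
  have hC : (0 : ℝ) < (#A).choose τ := by exact_mod_cast Nat.choose_pos hτ
  set m : ℝ := ↑(#A)
  set B := ∑ i ∈ A, bregman (f i) (g i) x y
  have hm : 0 < m * (m - 1) := by nlinarith
  have hτm : 0 ≤ m - τ := sub_nonneg.mpr hτ'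
  have hττ : (0 : ℝ) ≤ τ * (τ - 1) := by
    rcases Nat.eq_zero_or_pos τ with rfl | hτ0
    · simp
    · have : (1 : ℝ) ≤ τ := by exact_mod_cast hτ0
      nlinarith
  have hsum : ‖∑ i ∈ A, (g i x - g i y)‖ ^ 2 ≤ 2 * (m * LA) * B := by
    have hLip : ∀ u v, ‖∑ i ∈ A, g i u - ∑ i ∈ A, g i v‖ ≤ m * LA * ‖u - v‖ := fun u v => by
      have := hLA u v
      rwa [← smul_sub, norm_smul, norm_inv, RCLike.norm_natCast, inv_mul_le_iff₀ (by positivity),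
        ← mul_assoc] at this
    have := (convexOn_sum convex_univ fun i _ => hconv i).norm_sub_sq_le_two_mul_bregman
      (fun z => hasGradientAt_sum fun i _ => hgrad i z) hLip x y
    rwa [bregman_sum, ← sum_sub_distrib] at this
  have hind : ∑ i ∈ A, ‖g i x - g i y‖ ^ 2 ≤ 2 * Λ * B := by
    rw [mul_sum]
    exact sum_le_sum fun i hi =>
      (hconv i).norm_sub_sq_le_two_mul_bregman (hgrad i) (hΛ i hi) x y
  rw [inv_mul_le_iff₀ hC]
  calc ∑ S ∈ A.powersetCard τ, ‖∑ i ∈ S, (g i x - g i y)‖ ^ 2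
      = ((#A).choose τ * (τ * (τ - 1)) * ‖∑ i ∈ A, (g i x - g i y)‖ ^ 2
        + (#A).choose τ * (τ * (m - τ)) * ∑ i ∈ A, ‖g i x - g i y‖ ^ 2) / (m * (m - 1)) := by
        rw [eq_div_iff hm.ne', mul_comm, sum_powersetCard_norm_sq_sum]
    _ ≤ ((#A).choose τ * (τ * (τ - 1)) * (2 * (m * LA) * B)
        + (#A).choose τ * (τ * (m - τ)) * (2 * Λ * B)) / (m * (m - 1)) := by
        gcongr
    _ = _ := by field_simp

theorem mul_inv_choose_mul_sum_powersetCard_norm_sq_smul_le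
    (hconv : ∀ i, ConvexOn ℝ Set.univ (f i)) (hgrad : ∀ i z, HasGradientAt (f i) (g i z) z)
    (A : Finset ι) {τ : ℕ} (hA : 2 ≤ #A) (hτ : τ ≤ #A) {Λ LA : ℝ}
    (hΛ : ∀ i ∈ A, ∀ u v, ‖g i u - g i v‖ ≤ Λ * ‖u - v‖)
    (hLA : ∀ u v, ‖(#A : ℝ)⁻¹ • ∑ i ∈ A, g i u - (#A : ℝ)⁻¹ • ∑ i ∈ A, g i v‖ ≤ LA * ‖u - v‖)
    {q : ℝ} (hq : 0 < q) (N : ℝ) (x y : E) :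
    q * ((#A).choose τ : ℝ)⁻¹ *
        ∑ S ∈ A.powersetCard τ, ‖N⁻¹ • ∑ i ∈ S, ((#A : ℝ) / (q * τ)) • (g i x - g i y)‖ ^ 2
      ≤ 2 * ((N * τ)⁻¹ * (#A / (q * (#A - 1)) * ((τ - 1) * LA * #A + (#A - τ) * Λ)))
        * (N⁻¹ * ∑ i ∈ A, bregman (f i) (g i) x y) := by
  have hA' : (2 : ℝ) ≤ #A := by exact_mod_cast hA
  have hscale : ∀ S : Finset ι,
      ‖N⁻¹ • ∑ i ∈ S, ((#A : ℝ) / (q * τ)) • (g i x - g i y)‖ ^ 2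
        = (N⁻¹ * (#A / (q * τ))) ^ 2 * ‖∑ i ∈ S, (g i x - g i y)‖ ^ 2 := fun S => by
    rw [← smul_sum, smul_smul, norm_smul, mul_pow, Real.norm_eq_abs, sq_abs]
  simp only [hscale, ← mul_sum]
  calc q * ((#A).choose τ : ℝ)⁻¹ * ((N⁻¹ * (#A / (q * τ))) ^ 2
          * ∑ S ∈ A.powersetCard τ, ‖∑ i ∈ S, (g i x - g i y)‖ ^ 2)
      = q * (N⁻¹ * (#A / (q * τ))) ^ 2 * (((#A).choose τ : ℝ)⁻¹
          * ∑ S ∈ A.powersetCard τ, ‖∑ i ∈ S, (g i x - g i y)‖ ^ 2) := by ring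
    _ ≤ q * (N⁻¹ * (#A / (q * τ))) ^ 2 * (2 * τ * ((τ - 1) * LA * #A + (#A - τ) * Λ)
          / (#A * (#A - 1)) * ∑ i ∈ A, bregman (f i) (g i) x y) :=
        mul_le_mul_of_nonneg_left
          (inv_choose_mul_sum_powersetCard_norm_sq_le hconv hgrad A hA hτ hΛ hLA x y)
          (by positivity)
    _ = _ := by
        have : (#A : ℝ) - 1 ≠ 0 := by linarith
        field_simp

end Block

/-- Expected smoothness bound for τ-partition nice sampling (Lemma 1(i)). -/
theorem stmt2 {d n K : ℕ} (hK : 0 < K)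
    (f : Fin n → EuclideanSpace ℝ (Fin d) → ℝ)
    (g : Fin n → EuclideanSpace ℝ (Fin d) → EuclideanSpace ℝ (Fin d))
    (hgrad : ∀ i x, HasGradientAt (f i) (g i x) x)
    (C : Fin K → Finset (Fin n))
    (hpart : ∀ i : Fin n, ∃! j, i ∈ C j)
    (hcard : ∀ j, 2 ≤ (C j).card)
    (q : Fin K → ℝ) (hq : ∀ j, 0 < q j)
    (τ : ℕ) (hτ : ∀ j, τ ≤ (C j).card)
    (L : Fin n → ℝ) (LC : Fin K → ℝ)
    (hconv : ∀ i, ConvexOn ℝ Set.univ (f i))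
    (hLi : ∀ i x y, ‖g i x - g i y‖ ≤ L i * ‖x - y‖)
    (hLC : ∀ j x y,
      ‖((C j).card : ℝ)⁻¹ • ∑ i ∈ C j, g i x -
          ((C j).card : ℝ)⁻¹ • ∑ i ∈ C j, g i y‖ ≤ LC j * ‖x - y‖)
    (x y : EuclideanSpace ℝ (Fin d)) :
    ∑ j, q j * ((C j).card.choose τ : ℝ)⁻¹ *
        ∑ S ∈ (C j).powersetCard τ,
          ‖(n : ℝ)⁻¹ • ∑ i ∈ S, (((C j).card : ℝ) / (q j * (τ : ℝ))) • (g i x - g i y)‖ ^ 2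
      ≤ 2 *
          (((n : ℝ) * (τ : ℝ))⁻¹ *
            (Finset.univ.sup' ⟨⟨0, hK⟩, Finset.mem_univ _⟩ fun j =>
              ((C j).card : ℝ) / (q j * (((C j).card : ℝ) - 1)) *
                (((τ : ℝ) - 1) * LC j * ((C j).card : ℝ) +
                  (((C j).card : ℝ) - (τ : ℝ)) *
                    (C j).sup' (Finset.card_pos.mp (lt_of_lt_of_le (by norm_num) (hcard j))) L))) *
          ((n : ℝ)⁻¹ * ∑ i, f i x - (n : ℝ)⁻¹ * ∑ i, f i y -
            ⟪(n : ℝ)⁻¹ • ∑ i, g i y, x - y⟫) := by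
  have hblock := fun j => mul_inv_choose_mul_sum_powersetCard_norm_sq_smul_le hconv hgrad (C j)
    (hcard j) (hτ j) (Λ := (C j).sup' (card_pos.mp (by have := hcard j; omega)) L)
    (fun i hi u v => (hLi i u v).trans (by gcongr; exact le_sup' L hi))
    (hLC j) (hq j) n x y
  have hrhs : (n : ℝ)⁻¹ * ∑ i, f i x - (n : ℝ)⁻¹ * ∑ i, f i y - ⟪(n : ℝ)⁻¹ • ∑ i, g i y, x - y⟫
      = ∑ j, (n : ℝ)⁻¹ * ∑ i ∈ C j, bregman (f i) (g i) x y := by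
    rw [← mul_sum, sum_sum_eq_sum_of_existsUnique_mem hpart, ← bregman_sum, bregman,
      real_inner_smul_left, mul_sub, mul_sub]
  rw [hrhs, mul_sum]
  refine sum_le_sum fun j _ => (hblock j).trans ?_
  gcongr
  · exact mul_nonneg (by positivity) (sum_nonneg fun i _ => (hconv i).bregman_nonneg (hgrad i) x y)
  · exact le_sup'_of_le _ (mem_univ j) le_rfl
end

section
/- Gradient noise formula for τ-partition nice sampling (Lemma 1): for every x ∈ ℝ^d, Σ_{j=1}^K q_{C_j} · binom(n_{C_j},τ)^{-1} Σ_{S⊆C_j, |S|=τ} ‖(1/n) Σ_{i∈S} (n_{C_j}/(q_{C_j}τ)) ∇f_i(x)‖² = (1/(n²τ)) Σ_{j=1}^K [n_{C_j}²/(q_{C_j}(n_{C_j}−1))] · ((τ−1)·n_{C_j}·h_{C_j}(x) + (n_{C_j}−τ)·h̄_{C_j}(x)), where h_{C_j}(x) := ‖(1/n_{C_j}) Σ_{i∈C_j} ∇f_i(x)‖² and h̄_{C_j}(x) := (1/n_{C_j}) Σ_{i∈C_j} ‖∇f_i(x)‖². -/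
/-!
Expanding `‖∑ i ∈ S, v i‖ ^ 2` into inner products, the sum over all `τ`-subsets `S` of a
cluster `C` with `m` elements weighs `⟪v i, v j⟫` by the number of subsets containing both `i`
and `j`: `(m - 1).choose (τ - 1) = τ / m * m.choose τ` on the diagonal and
`(m - 2).choose (τ - 2) = τ (τ - 1) / (m (m - 1)) * m.choose τ` off it. The gradient noise
formula is this identity applied to each cluster, after pulling the scalar `n⁻¹ m / (q τ)` out
of the norm.
-/

open Finset

namespace Finset

variable {α : Type*} [DecidableEq α]

-- Cleared of denominators, the count holds with no size constraint relating `s`, `n`, `t`.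
theorem descFactorial_card_mul_card_filter_powersetCard_subset {s t : Finset α} (hst : s ⊆ t)
    (n : ℕ) :
    (#t).descFactorial #s * #{u ∈ t.powersetCard n | s ⊆ u}
      = n.descFactorial #s * (#t).choose n := by
  by_cases hsn : #s ≤ n
  · rw [card_filter_powersetCard_subset s t n hst hsn, Nat.descFactorial_eq_factorial_mul_choose,
      Nat.descFactorial_eq_factorial_mul_choose, mul_assoc, mul_assoc, ← Nat.choose_mul hsn,
      mul_comm (n.choose _)]
  · have hempty : {u ∈ t.powersetCard n | s ⊆ u} = ∅ := by
      refine filter_false_of_mem fun u hu hsu => hsn ?_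
      exact (mem_powersetCard.1 hu).2 ▸ card_le_card hsu
    rw [hempty, Nat.descFactorial_eq_zero_iff_lt.2 (not_le.1 hsn)]
    simp

theorem card_mul_card_filter_powersetCard_mem_mem (C : Finset α) {i j : α} (hi : i ∈ C)
    (hj : j ∈ C) (τ : ℕ) :
    (#C : ℝ) * (#C - 1) * #{S ∈ C.powersetCard τ | i ∈ S ∧ j ∈ S}
      = τ * (#C).choose τ * (if i = j then (#C : ℝ) - 1 else τ - 1) := by
  split_ifs with hij
  · subst hij
    have h := descFactorial_card_mul_card_filter_powersetCard_subset
      (singleton_subset_iff.2 hi) τ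
    simp only [card_singleton, Nat.descFactorial_one, singleton_subset_iff] at h
    simp only [and_self]
    rw [mul_right_comm, ← Nat.cast_mul, h]
    push_cast
    ring
  · have h := descFactorial_card_mul_card_filter_powersetCard_subset
      (insert_subset hi (singleton_subset_iff.2 hj)) τ
    rw [card_pair hij] at h
    have h' := congrArg (Nat.cast : ℕ → ℝ) h
    push_cast [Nat.cast_descFactorial_two] at h'
    simp only [insert_subset_iff, singleton_subset_iff] at h'
    rw [h']
    ring

variable {E : Type*} [NormedAddCommGroup E] [InnerProductSpace ℝ E]

theorem sum_powersetCard_norm_sum_sq (C : Finset α) (v : α → E) (τ : ℕ) :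
    ∑ S ∈ C.powersetCard τ, ‖∑ i ∈ S, v i‖ ^ 2
      = ∑ i ∈ C, ∑ j ∈ C, (#{S ∈ C.powersetCard τ | i ∈ S ∧ j ∈ S} : ℝ) * inner ℝ (v i) (v j) := by
  have hS : ∀ S ∈ C.powersetCard τ, ‖∑ i ∈ S, v i‖ ^ 2
      = ∑ i ∈ C, ∑ j ∈ C, if i ∈ S ∧ j ∈ S then inner ℝ (v i) (v j) else 0 := by
    intro S hS
    have hSC : C ∩ S = S := inter_eq_right.2 (mem_powersetCard.1 hS).1
    simp only [ite_and, sum_ite_irrel, sum_const_zero, sum_ite_mem, hSC,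
      ← real_inner_self_eq_norm_sq, sum_inner, inner_sum]
    exact sum_comm
  rw [sum_congr rfl hS, sum_comm]
  refine sum_congr rfl fun i _ => ?_
  rw [sum_comm]
  refine sum_congr rfl fun j _ => ?_
  rw [← sum_filter, sum_const, nsmul_eq_mul]

theorem card_mul_sum_powersetCard_norm_sum_sq (C : Finset α) (v : α → E) (τ : ℕ) :
    (#C : ℝ) * (#C - 1) * ∑ S ∈ C.powersetCard τ, ‖∑ i ∈ S, v i‖ ^ 2
      = τ * (#C).choose τ *
          ((τ - 1) * ‖∑ i ∈ C, v i‖ ^ 2 + (#C - τ) * ∑ i ∈ C, ‖v i‖ ^ 2) := by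
  have hterm : ∀ i ∈ C, ∀ j ∈ C,
      (#C : ℝ) * (#C - 1) * (#{S ∈ C.powersetCard τ | i ∈ S ∧ j ∈ S} * inner ℝ (v i) (v j))
        = τ * (#C).choose τ * ((τ - 1) * inner ℝ (v i) (v j)
            + if i = j then (#C - τ) * inner ℝ (v i) (v j) else 0) := by
    intro i hi j hj
    rw [← mul_assoc, card_mul_card_filter_powersetCard_mem_mem C hi hj]
    split_ifs <;> ring
  have hcross : ∑ i ∈ C, ∑ j ∈ C, inner ℝ (v i) (v j) = ‖∑ i ∈ C, v i‖ ^ 2 := by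
    rw [← real_inner_self_eq_norm_sq, sum_inner]
    simp only [inner_sum]
  rw [sum_powersetCard_norm_sum_sq, mul_sum,
    sum_congr rfl fun i hi => (mul_sum _ _ _).trans (sum_congr rfl (hterm i hi))]
  simp only [← mul_sum, sum_add_distrib, sum_ite_eq, sum_ite_mem, inter_self, hcross,
    real_inner_self_eq_norm_sq]

end Finset

theorem stmt4_general {d n K : ℕ}
    (g : Fin n → EuclideanSpace ℝ (Fin d) → EuclideanSpace ℝ (Fin d))
    (C : Fin K → Finset (Fin n))
    (hcard : ∀ j, 2 ≤ (C j).card)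
    (q : Fin K → ℝ) (hq : ∀ j, 0 < q j)
    (τ : ℕ) (hτ1 : 1 ≤ τ) (hτ : ∀ j, τ ≤ (C j).card)
    (x : EuclideanSpace ℝ (Fin d)) :
    ∑ j, q j * ((C j).card.choose τ : ℝ)⁻¹ *
        ∑ S ∈ (C j).powersetCard τ,
          ‖(n : ℝ)⁻¹ • ∑ i ∈ S, (((C j).card : ℝ) / (q j * (τ : ℝ))) • g i x‖ ^ 2
      = ((n : ℝ) ^ 2 * (τ : ℝ))⁻¹ *
          ∑ j, ((C j).card : ℝ) ^ 2 / (q j * (((C j).card : ℝ) - 1)) *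
            (((τ : ℝ) - 1) * ((C j).card : ℝ) *
                ‖((C j).card : ℝ)⁻¹ • ∑ i ∈ C j, g i x‖ ^ 2 +
              (((C j).card : ℝ) - (τ : ℝ)) *
                (((C j).card : ℝ)⁻¹ * ∑ i ∈ C j, ‖g i x‖ ^ 2)) := by
  rw [mul_sum]
  refine sum_congr rfl fun j _ => ?_
  have hm : (2 : ℝ) ≤ #(C j) := by exact_mod_cast hcard j
  have hpairs : (#(C j) : ℝ) * (#(C j) - 1) ≠ 0 := by nlinarith
  have hchoose : (((C j).card.choose τ : ℕ) : ℝ) ≠ 0 := by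
    exact_mod_cast (Nat.choose_pos (hτ j)).ne'
  have hτ0 : (τ : ℝ) ≠ 0 := Nat.cast_ne_zero.2 (Nat.one_le_iff_ne_zero.1 hτ1)
  have hq0 := (hq j).ne'
  have hsubsets := card_mul_sum_powersetCard_norm_sum_sq (C j) (g · x) τ
  simp only [← smul_sum, smul_smul, norm_smul, mul_pow, Real.norm_eq_abs, sq_abs] at hsubsets ⊢
  rw [← mul_sum, eq_div_of_mul_eq hpairs ((mul_comm _ _).trans hsubsets)]
  field_simp

/-- Gradient noise formula for τ-partition nice sampling (Lemma 1). -/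
theorem stmt4 {d n K : ℕ} (hn : 1 ≤ n) (hK : 0 < K)
    (f : Fin n → EuclideanSpace ℝ (Fin d) → ℝ)
    (g : Fin n → EuclideanSpace ℝ (Fin d) → EuclideanSpace ℝ (Fin d))
    (hgrad : ∀ i x, HasGradientAt (f i) (g i x) x)
    (C : Fin K → Finset (Fin n))
    (hpart : ∀ i : Fin n, ∃! j, i ∈ C j)
    (hcard : ∀ j, 2 ≤ (C j).card)
    (q : Fin K → ℝ) (hq : ∀ j, 0 < q j) (hqsum : ∑ j, q j = 1)
    (τ : ℕ) (hτ1 : 1 ≤ τ) (hτ : ∀ j, τ ≤ (C j).card)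
    (x : EuclideanSpace ℝ (Fin d)) :
    ∑ j, q j * ((C j).card.choose τ : ℝ)⁻¹ *
        ∑ S ∈ (C j).powersetCard τ,
          ‖(n : ℝ)⁻¹ • ∑ i ∈ S, (((C j).card : ℝ) / (q j * (τ : ℝ))) • g i x‖ ^ 2
      = ((n : ℝ) ^ 2 * (τ : ℝ))⁻¹ *
          ∑ j, ((C j).card : ℝ) ^ 2 / (q j * (((C j).card : ℝ) - 1)) *
            (((τ : ℝ) - 1) * ((C j).card : ℝ) *
                ‖((C j).card : ℝ)⁻¹ • ∑ i ∈ C j, g i x‖ ^ 2 +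
              (((C j).card : ℝ) - (τ : ℝ)) *
                (((C j).card : ℝ)⁻¹ * ∑ i ∈ C j, ‖g i x‖ ^ 2)) :=
  stmt4_general g C hcard q hq τ hτ1 hτ x
end

section
/- Gradient noise formula for τ-partition independent sampling (Lemma 1): for every x ∈ ℝ^d, Σ_{j=1}^K q_{C_j} Σ_{S⊆C_j} (Π_{i∈S} p_i)(Π_{i∈C_j∖S} (1−p_i)) · ‖(1/n) Σ_{i∈S} (1/(q_{C_j} p_i)) ∇f_i(x)‖² = (1/n²) Σ_{j=1}^K (1/q_{C_j}) · ( n_{C_j}²·h_{C_j}(x) + Σ_{i∈C_j} ((1−p_i)/p_i)·h_i(x) ), where h_i(x) := ‖∇f_i(x)‖², h_{C_j}(x) := ‖(1/n_{C_j}) Σ_{i∈C_j} ∇f_i(x)‖². -/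
/-!
A sample `S ⊆ T` that contains each `i` independently with probability `p i` has probability
`inclusionWeight p T S`. Conditioning on whether a fixed `a` lies in `S` shows that the importance
weighted estimator `∑ i ∈ S, (p i)⁻¹ • a i` of `∑ i ∈ T, a i` is unbiased and has second moment
`‖∑ i ∈ T, a i‖ ^ 2 + ∑ i ∈ T, (1 - p i) / p i * ‖a i‖ ^ 2`. The τ-partition estimator is this
estimator on the chosen block `C j`, rescaled by `(n * q j)⁻¹`; the factor `q j` of the block
probability cancels against one of the two factors `(q j)⁻¹`.
-/

open Finset

section InclusionWeight

variable {ι R : Type*} [DecidableEq ι] [CommRing R]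

def inclusionWeight (p : ι → R) (T S : Finset ι) : R :=
  (∏ i ∈ S, p i) * ∏ i ∈ T \ S, (1 - p i)

theorem inclusionWeight_insert_of_notMem (p : ι → R) {a : ι} {S T : Finset ι}
    (ha : a ∉ T) (hS : S ⊆ T) :
    inclusionWeight p (insert a T) S = (1 - p a) * inclusionWeight p T S := by
  have haS : a ∉ S := fun h => ha (hS h)
  rw [inclusionWeight, insert_sdiff_of_notMem _ haS,
    prod_insert fun h => ha (mem_sdiff.mp h).1, inclusionWeight]
  ring

theorem inclusionWeight_insert_insert (p : ι → R) {a : ι} {S T : Finset ι}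
    (ha : a ∉ T) (hS : S ⊆ T) :
    inclusionWeight p (insert a T) (insert a S) = p a * inclusionWeight p T S := by
  rw [inclusionWeight, prod_insert fun h => ha (hS h), insert_sdiff_insert,
    sdiff_insert_of_notMem ha, inclusionWeight]
  ring

theorem sum_inclusionWeight (p : ι → R) (T : Finset ι) :
    ∑ S ∈ T.powerset, inclusionWeight p T S = 1 := by
  simp only [inclusionWeight, ← prod_add, add_sub_cancel, prod_const_one]

variable {M : Type*} [AddCommGroup M] [Module R M]

theorem sum_powerset_insert_inclusionWeight_smul (p : ι → R) {a : ι} {T : Finset ι}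
    (ha : a ∉ T) (F : Finset ι → M) :
    ∑ S ∈ (insert a T).powerset, inclusionWeight p (insert a T) S • F S
      = (1 - p a) • ∑ S ∈ T.powerset, inclusionWeight p T S • F S
        + p a • ∑ S ∈ T.powerset, inclusionWeight p T S • F (insert a S) := by
  rw [sum_powerset_insert ha, smul_sum, smul_sum]
  congr 1 <;> refine sum_congr rfl fun S hS => ?_
  · rw [inclusionWeight_insert_of_notMem p ha (mem_powerset.mp hS), mul_smul]
  · rw [inclusionWeight_insert_insert p ha (mem_powerset.mp hS), mul_smul]

theorem sum_inclusionWeight_smul_sum (p : ι → R) (a : ι → M) (T : Finset ι) :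
    ∑ S ∈ T.powerset, inclusionWeight p T S • ∑ i ∈ S, a i = ∑ i ∈ T, p i • a i := by
  induction T using Finset.induction with
  | empty => simp [inclusionWeight]
  | @insert c T hc ih =>
    have hsplit : ∑ S ∈ T.powerset, inclusionWeight p T S • ∑ i ∈ insert c S, a i
        = ∑ S ∈ T.powerset, inclusionWeight p T S • (a c + ∑ i ∈ S, a i) :=
      sum_congr rfl fun S hS => by rw [sum_insert fun h => hc (mem_powerset.mp hS h)]
    rw [sum_powerset_insert_inclusionWeight_smul p hc, hsplit, sum_insert hc]
    simp only [smul_add, sum_add_distrib, ← sum_smul, sum_inclusionWeight, one_smul, ih]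
    module

end InclusionWeight

section SecondMoment

variable {ι E : Type*} [DecidableEq ι] [NormedAddCommGroup E] [InnerProductSpace ℝ E]

theorem sum_inclusionWeight_mul_norm_sum_sq (p : ι → ℝ) (a : ι → E) (T : Finset ι) :
    ∑ S ∈ T.powerset, inclusionWeight p T S * ‖∑ i ∈ S, a i‖ ^ 2
      = ‖∑ i ∈ T, p i • a i‖ ^ 2 + ∑ i ∈ T, p i * (1 - p i) * ‖a i‖ ^ 2 := by
  induction T using Finset.induction with
  | empty => simp [inclusionWeight]
  | @insert c T hc ih =>
    have hsplit : ∑ S ∈ T.powerset, inclusionWeight p T S * ‖∑ i ∈ insert c S, a i‖ ^ 2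
        = ∑ S ∈ T.powerset, inclusionWeight p T S *
            (‖a c‖ ^ 2 + 2 * inner ℝ (a c) (∑ i ∈ S, a i) + ‖∑ i ∈ S, a i‖ ^ 2) :=
      sum_congr rfl fun S hS => by
        rw [sum_insert fun h => hc (mem_powerset.mp hS h), norm_add_sq_real]
    have hinner : ∑ S ∈ T.powerset, inclusionWeight p T S * inner ℝ (a c) (∑ i ∈ S, a i)
        = inner ℝ (a c) (∑ i ∈ T, p i • a i) := by
      simp only [← sum_inclusionWeight_smul_sum p a T, inner_sum, real_inner_smul_right]
    have hrec := sum_powerset_insert_inclusionWeight_smul p hc fun S => ‖∑ i ∈ S, a i‖ ^ 2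
    simp only [smul_eq_mul] at hrec
    rw [hrec, hsplit]
    simp only [mul_add, sum_add_distrib, ← sum_mul, mul_left_comm _ (2 : ℝ), ← mul_sum,
      sum_inclusionWeight, hinner, ih, sum_insert hc, norm_add_sq_real, norm_smul,
      real_inner_smul_left, Real.norm_eq_abs, mul_pow, sq_abs]
    ring

theorem sum_inclusionWeight_mul_norm_sum_inv_smul_sq (p : ι → ℝ) (a : ι → E) {T : Finset ι}
    (hp : ∀ i ∈ T, p i ≠ 0) :
    ∑ S ∈ T.powerset, inclusionWeight p T S * ‖∑ i ∈ S, (p i)⁻¹ • a i‖ ^ 2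
      = ‖∑ i ∈ T, a i‖ ^ 2 + ∑ i ∈ T, (1 - p i) / p i * ‖a i‖ ^ 2 := by
  have hmean : ∑ i ∈ T, p i • (p i)⁻¹ • a i = ∑ i ∈ T, a i :=
    sum_congr rfl fun i hi => smul_inv_smul₀ (hp i hi) _
  have hvar : ∑ i ∈ T, p i * (1 - p i) * ‖(p i)⁻¹ • a i‖ ^ 2
      = ∑ i ∈ T, (1 - p i) / p i * ‖a i‖ ^ 2 := sum_congr rfl fun i hi => by
    have := hp i hi
    rw [norm_smul, mul_pow, norm_inv, Real.norm_eq_abs, inv_pow, sq_abs]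
    field_simp
  rw [sum_inclusionWeight_mul_norm_sum_sq, hmean, hvar]

end SecondMoment

theorem Finset.card_sq_mul_norm_inv_card_smul_sum_sq {ι E : Type*} [NormedAddCommGroup E]
    [NormedSpace ℝ E] (s : Finset ι) (v : ι → E) :
    (#s : ℝ) ^ 2 * ‖(#s : ℝ)⁻¹ • ∑ i ∈ s, v i‖ ^ 2 = ‖∑ i ∈ s, v i‖ ^ 2 := by
  rcases s.eq_empty_or_nonempty with rfl | hs
  · simp
  · have : (#s : ℝ) ≠ 0 := by exact_mod_cast hs.card_pos.ne'
    rw [norm_smul, mul_pow, norm_inv, Real.norm_natCast, inv_pow,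
      mul_inv_cancel_left₀ (pow_ne_zero 2 this)]

theorem stmt5_general {d n K : ℕ}
    (g : Fin n → EuclideanSpace ℝ (Fin d) → EuclideanSpace ℝ (Fin d))
    (C : Fin K → Finset (Fin n))
    (q : Fin K → ℝ)
    (p : Fin n → ℝ) (hp0 : ∀ i, 0 < p i)
    (x : EuclideanSpace ℝ (Fin d)) :
    ∑ j, q j *
        ∑ S ∈ (C j).powerset,
          ((∏ i ∈ S, p i) * ∏ i ∈ C j \ S, (1 - p i)) *
            ‖(n : ℝ)⁻¹ • ∑ i ∈ S, (q j * p i)⁻¹ • g i x‖ ^ 2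
      = ((n : ℝ) ^ 2)⁻¹ *
          ∑ j, (q j)⁻¹ *
            (((C j).card : ℝ) ^ 2 * ‖((C j).card : ℝ)⁻¹ • ∑ i ∈ C j, g i x‖ ^ 2 +
              ∑ i ∈ C j, (1 - p i) / p i * ‖g i x‖ ^ 2) := by
  rw [mul_sum]
  refine sum_congr rfl fun j _ => ?_
  have hrescale : ∀ S : Finset (Fin n), (n : ℝ)⁻¹ • ∑ i ∈ S, (q j * p i)⁻¹ • g i x
      = ((n : ℝ) * q j)⁻¹ • ∑ i ∈ S, (p i)⁻¹ • g i x := fun S => by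
    simp only [smul_sum, smul_smul, mul_inv]
    ring_nf
  have hq_cancel : q j * |((n : ℝ) * q j)⁻¹| ^ 2 = ((n : ℝ) ^ 2)⁻¹ * (q j)⁻¹ := by
    rcases eq_or_ne (q j) 0 with h | h
    · simp [h]
    · rw [sq_abs]
      field_simp
  rw [card_sq_mul_norm_inv_card_smul_sum_sq,
    ← sum_inclusionWeight_mul_norm_sum_inv_smul_sq p (g · x) fun i _ => (hp0 i).ne']
  change q j * ∑ S ∈ (C j).powerset, inclusionWeight p (C j) S * _ = _
  simp only [hrescale, norm_smul, mul_pow, Real.norm_eq_abs,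
    mul_left_comm (inclusionWeight p (C j) _)]
  rw [← mul_sum, ← mul_assoc, hq_cancel, mul_assoc]

/-- Gradient noise formula for τ-partition independent sampling (Lemma 1). -/
theorem stmt5 {d n K : ℕ} (hn : 1 ≤ n) (hK : 0 < K)
    (f : Fin n → EuclideanSpace ℝ (Fin d) → ℝ)
    (g : Fin n → EuclideanSpace ℝ (Fin d) → EuclideanSpace ℝ (Fin d))
    (hgrad : ∀ i x, HasGradientAt (f i) (g i x) x)
    (C : Fin K → Finset (Fin n))
    (hpart : ∀ i : Fin n, ∃! j, i ∈ C j)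
    (hCne : ∀ j, (C j).Nonempty)
    (q : Fin K → ℝ) (hq : ∀ j, 0 < q j) (hqsum : ∑ j, q j = 1)
    (p : Fin n → ℝ) (hp0 : ∀ i, 0 < p i) (hp1 : ∀ i, p i ≤ 1)
    (x : EuclideanSpace ℝ (Fin d)) :
    ∑ j, q j *
        ∑ S ∈ (C j).powerset,
          ((∏ i ∈ S, p i) * ∏ i ∈ C j \ S, (1 - p i)) *
            ‖(n : ℝ)⁻¹ • ∑ i ∈ S, (q j * p i)⁻¹ • g i x‖ ^ 2
      = ((n : ℝ) ^ 2)⁻¹ *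
          ∑ j, (q j)⁻¹ *
            (((C j).card : ℝ) ^ 2 * ‖((C j).card : ℝ)⁻¹ • ∑ i ∈ C j, g i x‖ ^ 2 +
              ∑ i ∈ C j, (1 - p i) / p i * ‖g i x‖ ^ 2) :=
  stmt5_general g C q p hp0 x
end

section
/- Crossing-point lemma for piecewise-linear minimization: let l_1, …, l_k : ℝ → ℝ be monotone increasing functions and r : ℝ → ℝ a monotone decreasing function, and suppose x_1, …, x_k ∈ ℝ satisfy l_i(x_i) = r(x_i) for each i. Then x* := min_i x_i is a global minimizer of the function x ↦ max{ l_1(x), …, l_k(x), r(x) }; that is, for every x ∈ ℝ, max{ l_1(x*), …, l_k(x*), r(x*) } ≤ max{ l_1(x), …, l_k(x), r(x) }. -/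
open Finset

/-- Crossing-point lemma for piecewise-linear minimization: if `l i` are monotone
increasing, `r` is monotone decreasing, and `l i (x i) = r (x i)` for each `i`, then
`x* = min_i x i` globally minimizes `x ↦ max{l 1 x, …, l k x, r x}`. -/
theorem stmt6 (k : ℕ) (hk : 0 < k)
    (l : Fin k → ℝ → ℝ) (r : ℝ → ℝ)
    (hl : ∀ i, Monotone (l i)) (hr : Antitone r)
    (x : Fin k → ℝ) (hx : ∀ i, l i (x i) = r (x i))
    (hne : (Finset.univ : Finset (Fin k)).Nonempty)
    (xstar : ℝ) (hxstar : xstar = Finset.univ.inf' hne x) :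
    ∀ y : ℝ,
      max (Finset.univ.sup' hne fun i => l i xstar) (r xstar) ≤
        max (Finset.univ.sup' hne fun i => l i y) (r y) := by
  intro y
  have hle : ∀ i, xstar ≤ x i := by
    intro i; rw [hxstar]; exact inf'_le _ (mem_univ i)
  have hLHS : max (Finset.univ.sup' hne fun i => l i xstar) (r xstar) = r xstar := by
    apply max_eq_right
    apply sup'_le
    intro i _
    calc l i xstar ≤ l i (x i) := hl i (hle i)
      _ = r (x i) := hx i
      _ ≤ r xstar := hr (hle i)
  rw [hLHS]
  rcases le_total y xstar with h | h
  · exact le_max_of_le_right (hr h)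
  · obtain ⟨j, _, hj⟩ := exists_mem_eq_inf' hne x
    have : r xstar ≤ l j y := by
      calc r xstar = r (x j) := by rw [hxstar, hj]
        _ = l j (x j) := (hx j).symm
        _ ≤ l j y := hl j (by rw [hxstar, hj] at h; exact h)
    exact le_max_of_le_left (this.trans (le_sup' (fun i => l i y) (mem_univ j)))
end

section
/- Optimal batch size for τ-partition nice sampling (Theorem 2): fix ε, μ > 0, a point x ∈ ℝ^d, set h_{C_j} := ‖(1/n_{C_j})Σ_{i∈C_j}∇f_i(x)‖², h̄_{C_j} := (1/n_{C_j})Σ_{i∈C_j}‖∇f_i(x)‖², e_{C_j} := q_{C_j}(n_{C_j}−1), L_max^{C_r} := max_{i∈C_r} L_i, and define for real τ the functions A(τ) := max_r (1/n)·[n_{C_r}/e_{C_r}]·((τ−1)·L_{C_r}·n_{C_r} + (n_{C_r}−τ)·L_max^{C_r}) (this equals τ·𝓛(τ)) and B(τ) := (2/(εμ))·(1/n²)·Σ_j [n_{C_j}²/e_{C_j}]·((τ−1)·n_{C_j}·h_{C_j} + (n_{C_j}−τ)·h̄_{C_j}) (this equals (2/(εμ))·τ·σ(x,τ)). Assume Σ_j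 (n_{C_j}²/e_{C_j})·(n_{C_j}·h_{C_j} − h̄_{C_j}) ≤ 0 and n_{C_r}·L_{C_r} > L_max^{C_r} for every r. Then τ(x) := min_r [ (n·n_{C_r}²/e_{C_r})(L_{C_r} − L_max^{C_r}) + (2/(εμ))·Σ_j (n_{C_j}³/e_{C_j})(h̄_{C_j} − h_{C_j}) ] / [ (n·n_{C_r}/e_{C_r})(n_{C_r}·L_{C_r} − L_max^{C_r}) + (2/(εμ))·Σ_j (n_{C_j}²/e_{C_j})(h̄_{C_j} − n_{C_j}·h_{C_j}) ] is a global minimizer over τ ∈ ℝ of the function τ ↦ max{ A(τ), B(τ) }. -/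
open Finset

private lemma stmt7_aux {K : ℕ} (hne : (Finset.univ : Finset (Fin K)).Nonempty)
    (a b : Fin K → ℝ) (s β : ℝ) (ha : ∀ r, 0 < a r) (hs : s ≤ 0)
    (τ : ℝ) (hτ : τ = Finset.univ.inf' hne fun r => (β - b r) / (a r - s)) :
    ∀ t : ℝ, max (Finset.univ.sup' hne fun r => a r * τ + b r) (s * τ + β)
      ≤ max (Finset.univ.sup' hne fun r => a r * t + b r) (s * t + β) := by
  intro t
  have has : ∀ r, 0 < a r - s := fun r => by linarith [ha r]
  obtain ⟨r0, _, hr0⟩ := Finset.exists_mem_eq_inf' hne fun r => (β - b r) / (a r - s)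
  have hτ0 : τ = (β - b r0) / (a r0 - s) := by rw [hτ, hr0]
  have hcross : a r0 * τ + b r0 = s * τ + β := by
    have h2 : τ * (a r0 - s) = β - b r0 := by
      rw [hτ0, div_mul_cancel₀ _ (has r0).ne']
    linear_combination h2
  have hAleB : (Finset.univ.sup' hne fun r => a r * τ + b r) ≤ s * τ + β := by
    apply Finset.sup'_le
    intro r _
    have hle : τ ≤ (β - b r) / (a r - s) := by
      rw [hτ]; exact Finset.inf'_le _ (Finset.mem_univ r)
    have h2 : τ * (a r - s) ≤ β - b r := (le_div_iff₀ (has r)).mp hle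
    nlinarith [h2]
  rcases le_total t τ with h | h
  · have hB2 : s * τ + β ≤ s * t + β := by nlinarith
    calc max (Finset.univ.sup' hne fun r => a r * τ + b r) (s * τ + β)
        ≤ s * τ + β := max_le hAleB le_rfl
      _ ≤ s * t + β := hB2
      _ ≤ _ := le_max_right _ _
  · have h3 : s * τ + β ≤ a r0 * t + b r0 := by nlinarith [ha r0]
    calc max (Finset.univ.sup' hne fun r => a r * τ + b r) (s * τ + β)
        ≤ s * τ + β := max_le hAleB le_rfl
      _ ≤ a r0 * t + b r0 := h3
      _ ≤ Finset.univ.sup' hne fun r => a r * t + b r :=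
          Finset.le_sup' (fun r => a r * t + b r) (Finset.mem_univ r0)
      _ ≤ _ := le_max_left _ _

/-- Optimal batch size for τ-partition nice sampling (Theorem 2). -/
theorem stmt7 {d n K : ℕ} (hn : 0 < n) (hK : 0 < K)
    (hne : (Finset.univ : Finset (Fin K)).Nonempty)
    (f : Fin n → EuclideanSpace ℝ (Fin d) → ℝ)
    (hf : ∀ i, Differentiable ℝ (f i))
    (C : Fin K → Finset (Fin n))
    (hpart : ∀ i : Fin n, ∃! j, i ∈ C j)
    (hcard : ∀ j, 2 ≤ (C j).card)
    (hCne : ∀ j, (C j).Nonempty)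
    (q : Fin K → ℝ) (hq : ∀ j, 0 < q j) (hqsum : ∑ j, q j = 1)
    (L : Fin n → ℝ) (hL : ∀ i, 0 < L i)
    (LC : Fin K → ℝ) (hLCpos : ∀ j, 0 < LC j)
    (ε μ : ℝ) (hε : 0 < ε) (hμ : 0 < μ)
    (x : EuclideanSpace ℝ (Fin d))
    (hC hbar e Lmax : Fin K → ℝ)
    (hhC : ∀ j, hC j = ‖((C j).card : ℝ)⁻¹ • ∑ i ∈ C j, gradient (f i) x‖ ^ 2)
    (hhbar : ∀ j, hbar j = ((C j).card : ℝ)⁻¹ * ∑ i ∈ C j, ‖gradient (f i) x‖ ^ 2)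
    (he : ∀ j, e j = q j * (((C j).card : ℝ) - 1))
    (hLmax : ∀ j, Lmax j = (C j).sup' (hCne j) L)
    (A B : ℝ → ℝ)
    (hA : ∀ t : ℝ, A t =
      Finset.univ.sup' hne fun r =>
        (n : ℝ)⁻¹ * (((C r).card : ℝ) / e r) *
          ((t - 1) * LC r * ((C r).card : ℝ) + (((C r).card : ℝ) - t) * Lmax r))
    (hB : ∀ t : ℝ, B t =
      2 / (ε * μ) * ((n : ℝ) ^ 2)⁻¹ *
        ∑ j, ((C j).card : ℝ) ^ 2 / e j *
          ((t - 1) * ((C j).card : ℝ) * hC j + (((C j).card : ℝ) - t) * hbar j))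
    (hneg : ∑ j, ((C j).card : ℝ) ^ 2 / e j * (((C j).card : ℝ) * hC j - hbar j) ≤ 0)
    (hgap : ∀ r, Lmax r < ((C r).card : ℝ) * LC r)
    (τstar : ℝ)
    (hτstar : τstar = Finset.univ.inf' hne fun r =>
      ((n : ℝ) * ((C r).card : ℝ) ^ 2 / e r * (LC r - Lmax r) +
          2 / (ε * μ) * ∑ j, ((C j).card : ℝ) ^ 3 / e j * (hbar j - hC j)) /
        ((n : ℝ) * ((C r).card : ℝ) / e r * (((C r).card : ℝ) * LC r - Lmax r) +
          2 / (ε * μ) * ∑ j, ((C j).card : ℝ) ^ 2 / e j * (hbar j - ((C j).card : ℝ) * hC j))) :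
    ∀ t : ℝ, max (A τstar) (B τstar) ≤ max (A t) (B t) := by
  have hn0 : ((n : ℝ)) ≠ 0 := Nat.cast_ne_zero.mpr hn.ne'
  have hnpos : (0:ℝ) < n := Nat.cast_pos.mpr hn
  have hm2 : ∀ j, (2:ℝ) ≤ ((C j).card : ℝ) := fun j => by exact_mod_cast hcard j
  have hmpos : ∀ j, (0:ℝ) < ((C j).card : ℝ) := fun j => lt_of_lt_of_le two_pos (hm2 j)
  have hepos : ∀ j, 0 < e j := fun j => by
    rw [he j]; exact mul_pos (hq j) (by linarith [hm2 j])
  have hcpos : (0:ℝ) < 2 / (ε * μ) := div_pos two_pos (mul_pos hε hμ)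
  set a : Fin K → ℝ := fun r =>
    (n : ℝ)⁻¹ * (((C r).card : ℝ) / e r) * (((C r).card : ℝ) * LC r - Lmax r) with ha_def
  set b : Fin K → ℝ := fun r =>
    (n : ℝ)⁻¹ * (((C r).card : ℝ) / e r) *
      (((C r).card : ℝ) * Lmax r - ((C r).card : ℝ) * LC r) with hb_def
  set s : ℝ := 2 / (ε * μ) * ((n : ℝ) ^ 2)⁻¹ *
    ∑ j, ((C j).card : ℝ) ^ 2 / e j * (((C j).card : ℝ) * hC j - hbar j) with hs_def
  set β : ℝ := 2 / (ε * μ) * ((n : ℝ) ^ 2)⁻¹ *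
    ∑ j, ((C j).card : ℝ) ^ 3 / e j * (hbar j - hC j) with hβ_def
  have hapos : ∀ r, 0 < a r := by
    intro r
    have := hgap r
    exact mul_pos (mul_pos (inv_pos.mpr hnpos) (div_pos (hmpos r) (hepos r)))
      (by linarith)
  have hsle : s ≤ 0 := by
    rw [hs_def]
    exact mul_nonpos_of_nonneg_of_nonpos
      (le_of_lt (mul_pos hcpos (inv_pos.mpr (pow_pos hnpos 2)))) hneg
  have hA' : ∀ t : ℝ, A t = Finset.univ.sup' hne fun r => a r * t + b r := by
    intro t
    rw [hA t]
    apply Finset.sup'_congr hne rfl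
    intro r _
    simp only [ha_def, hb_def]
    ring
  have hB' : ∀ t : ℝ, B t = s * t + β := by
    intro t
    rw [hB t, hs_def, hβ_def]
    have key : (∑ j, ((C j).card : ℝ) ^ 2 / e j *
          ((t - 1) * ((C j).card : ℝ) * hC j + (((C j).card : ℝ) - t) * hbar j))
        = (∑ j, ((C j).card : ℝ) ^ 2 / e j * (((C j).card : ℝ) * hC j - hbar j)) * t
          + ∑ j, ((C j).card : ℝ) ^ 3 / e j * (hbar j - hC j) := by
      rw [Finset.sum_mul, ← Finset.sum_add_distrib]
      exact Finset.sum_congr rfl fun j _ => by ring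
    rw [key]
    ring
  have hsum : (∑ j, ((C j).card : ℝ) ^ 2 / e j * (hbar j - ((C j).card : ℝ) * hC j))
      = -∑ j, ((C j).card : ℝ) ^ 2 / e j * (((C j).card : ℝ) * hC j - hbar j) := by
    rw [← Finset.sum_neg_distrib]
    exact Finset.sum_congr rfl fun j _ => by ring
  have hτ' : τstar = Finset.univ.inf' hne fun r => (β - b r) / (a r - s) := by
    rw [hτstar]
    apply Finset.inf'_congr hne rfl
    intro r _
    have he0 := (hepos r).ne'
    have hNr : ((n : ℝ) * ((C r).card : ℝ) ^ 2 / e r * (LC r - Lmax r) +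
          2 / (ε * μ) * ∑ j, ((C j).card : ℝ) ^ 3 / e j * (hbar j - hC j))
        = (n : ℝ) ^ 2 * (β - b r) := by
      simp only [hβ_def, hb_def]
      field_simp
      ring
    have hDr : ((n : ℝ) * ((C r).card : ℝ) / e r * (((C r).card : ℝ) * LC r - Lmax r) +
          2 / (ε * μ) * ∑ j, ((C j).card : ℝ) ^ 2 / e j * (hbar j - ((C j).card : ℝ) * hC j))
        = (n : ℝ) ^ 2 * (a r - s) := by
      rw [hsum]
      simp only [ha_def, hs_def]
      field_simp
      ring
    rw [hNr, hDr, mul_div_mul_left _ _ (pow_ne_zero 2 hn0)]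
  intro t
  rw [hA' τstar, hB' τstar, hA' t, hB' t]
  exact stmt7_aux hne a b s β hapos hsle τstar hτ' t
end

section
/- Optimal batch size for τ-partition independent sampling with p_i = τ/n_{C_j} (Theorem 2): fix ε, μ > 0, a point x ∈ ℝ^d, set h_{C_j} := ‖(1/n_{C_j})Σ_{i∈C_j}∇f_i(x)‖², h̄_{C_j} := (1/n_{C_j})Σ_{i∈C_j}‖∇f_i(x)‖², L_max^{C_r} := max_{i∈C_r} L_i, and define for real τ the functions A(τ) := (1/n)·max_r (1/q_{C_r})·(τ·n_{C_r}·L_{C_r} + (n_{C_r}−τ)·L_max^{C_r}) (this equals τ·𝓛(τ)) and B(τ) := (2/(εμ))·(1/n²)·Σ_j (1/q_{C_j})·(τ·n_{C_j}²·h_{C_j} + (n_{C_j}−τ)·n_{C_j}·h̄_{C_j}) (this equals (2/(εμ))·τ·σ(x,τ)). Assume Σ_j (n_{C_j}/q_{C_j})·(n_{C_j}·h_{C_j} − h̄_{C_j}) ≤ 0 and n_{C_r}·L_{C_r} > L_max^{C_r} for every r. Then τ(x) := min_r [ (2/(εμ))·Σ_j (n_{C_j}²/q_{C_j})·h̄_{C_j}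 − (n·n_{C_r}/q_{C_r})·L_max^{C_r} ] / [ (2/(εμ))·Σ_j (n_{C_j}/q_{C_j})·(h̄_{C_j} − n_{C_j}·h_{C_j}) + (n/q_{C_r})·(n_{C_r}·L_{C_r} − L_max^{C_r}) ] is a global minimizer over τ ∈ ℝ of the function τ ↦ max{ A(τ), B(τ) }. -/
open Finset

/-- Optimal batch size for τ-partition independent sampling with `p i = τ / n_{C j}`
(Theorem 2). -/
theorem stmt8 {d n K : ℕ} (hn : 0 < n) (hK : 0 < K)
    (hne : (Finset.univ : Finset (Fin K)).Nonempty)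
    (f : Fin n → EuclideanSpace ℝ (Fin d) → ℝ)
    (hf : ∀ i, Differentiable ℝ (f i))
    (C : Fin K → Finset (Fin n))
    (hpart : ∀ i : Fin n, ∃! j, i ∈ C j)
    (hCne : ∀ j, (C j).Nonempty)
    (q : Fin K → ℝ) (hq : ∀ j, 0 < q j) (hqsum : ∑ j, q j = 1)
    (L : Fin n → ℝ) (hL : ∀ i, 0 < L i)
    (LC : Fin K → ℝ) (hLCpos : ∀ j, 0 < LC j)
    (ε μ : ℝ) (hε : 0 < ε) (hμ : 0 < μ)
    (x : EuclideanSpace ℝ (Fin d))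
    (hC hbar Lmax : Fin K → ℝ)
    (hhC : ∀ j, hC j = ‖((C j).card : ℝ)⁻¹ • ∑ i ∈ C j, gradient (f i) x‖ ^ 2)
    (hhbar : ∀ j, hbar j = ((C j).card : ℝ)⁻¹ * ∑ i ∈ C j, ‖gradient (f i) x‖ ^ 2)
    (hLmax : ∀ j, Lmax j = (C j).sup' (hCne j) L)
    (A B : ℝ → ℝ)
    (hA : ∀ t : ℝ, A t =
      (n : ℝ)⁻¹ *
        Finset.univ.sup' hne fun r =>
          (q r)⁻¹ * (t * ((C r).card : ℝ) * LC r + (((C r).card : ℝ) - t) * Lmax r))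
    (hB : ∀ t : ℝ, B t =
      2 / (ε * μ) * ((n : ℝ) ^ 2)⁻¹ *
        ∑ j, (q j)⁻¹ *
          (t * ((C j).card : ℝ) ^ 2 * hC j +
            (((C j).card : ℝ) - t) * ((C j).card : ℝ) * hbar j))
    (hneg : ∑ j, ((C j).card : ℝ) / q j * (((C j).card : ℝ) * hC j - hbar j) ≤ 0)
    (hgap : ∀ r, Lmax r < ((C r).card : ℝ) * LC r)
    (τstar : ℝ)
    (hτstar : τstar = Finset.univ.inf' hne fun r =>
      (2 / (ε * μ) * ∑ j, ((C j).card : ℝ) ^ 2 / q j * hbar j -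
          (n : ℝ) * ((C r).card : ℝ) / q r * Lmax r) /
        (2 / (ε * μ) * ∑ j, ((C j).card : ℝ) / q j * (hbar j - ((C j).card : ℝ) * hC j) +
          (n : ℝ) / q r * (((C r).card : ℝ) * LC r - Lmax r))) :
    ∀ t : ℝ, max (A τstar) (B τstar) ≤ max (A t) (B t) := by

  intro t
  have hnR : (0:ℝ) < (n:ℝ) := by exact_mod_cast hn
  have hnne : (n:ℝ) ≠ 0 := hnR.ne'
  have hc : (0:ℝ) < 2 / (ε * μ) := by positivity
  set c : ℝ := 2 / (ε * μ) with hcdef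
  set S1 : ℝ := ∑ j, ((C j).card : ℝ) / q j * (((C j).card : ℝ) * hC j - hbar j) with hS1def
  set S0 : ℝ := ∑ j, ((C j).card : ℝ) ^ 2 / q j * hbar j with hS0def
  set S1' : ℝ := ∑ j, ((C j).card : ℝ) / q j * (hbar j - ((C j).card : ℝ) * hC j) with hS1'def
  have hS1 : S1 ≤ 0 := hneg
  have hS1' : S1' = -S1 := by
    rw [hS1def, hS1'def, ← Finset.sum_neg_distrib]
    exact Finset.sum_congr rfl fun j _ => by ring
  have hBform : ∀ s : ℝ, B s = c * ((n:ℝ)^2)⁻¹ * (s * S1 + S0) := by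
    intro s
    rw [hB s]
    congr 1
    rw [hS1def, hS0def, Finset.mul_sum, ← Finset.sum_add_distrib]
    refine Finset.sum_congr rfl fun j _ => ?_
    have hqj : q j ≠ 0 := (hq j).ne'
    field_simp
    ring
  have hα : ∀ r, 0 < ((C r).card : ℝ) * LC r - Lmax r := fun r => sub_pos.mpr (hgap r)
  set D : Fin K → ℝ := fun r => c * S1' + (n:ℝ) / q r * (((C r).card : ℝ) * LC r - Lmax r)
    with hDdef
  set Nf : Fin K → ℝ := fun r => c * S0 - (n:ℝ) * ((C r).card : ℝ) / q r * Lmax r with hNdef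
  set τf : Fin K → ℝ := fun r => Nf r / D r with hτfdef
  have hDpos : ∀ r, 0 < D r := by
    intro r
    have h1 : 0 < (n:ℝ) / q r * (((C r).card : ℝ) * LC r - Lmax r) :=
      mul_pos (div_pos hnR (hq r)) (hα r)
    have h2 : 0 ≤ c * S1' := by rw [hS1']; nlinarith
    simp only [hDdef]
    linarith
  have hτeq : τstar = Finset.univ.inf' hne τf := hτstar
  have hcross : ∀ r, τf r * D r = Nf r := by
    intro r
    simp only [hτfdef]
    exact div_mul_cancel₀ _ (hDpos r).ne'
  have hkey : ∀ (r : Fin K) (s : ℝ),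
      (n:ℝ)⁻¹ * ((q r)⁻¹ * (s * ((C r).card : ℝ) * LC r + (((C r).card : ℝ) - s) * Lmax r))
        - c * ((n:ℝ)^2)⁻¹ * (s * S1 + S0)
        = ((n:ℝ)^2)⁻¹ * (s * D r - Nf r) := by
    intro r s
    have hqr : q r ≠ 0 := (hq r).ne'
    simp only [hDdef, hNdef, hS1']
    field_simp
    ring
  have hτle : ∀ r, τstar ≤ τf r := by
    intro r
    rw [hτeq]
    exact Finset.inf'_le _ (Finset.mem_univ r)
  have hAB : A τstar ≤ B τstar := by
    rw [hA τstar]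
    rw [inv_mul_le_iff₀ hnR]
    refine Finset.sup'_le _ _ fun r _ => ?_
    have h1 := hkey r τstar
    have h2 : τstar * D r ≤ Nf r := by
      calc τstar * D r ≤ τf r * D r := mul_le_mul_of_nonneg_right (hτle r) (hDpos r).le
        _ = Nf r := hcross r
    have h3 : ((n:ℝ)^2)⁻¹ * (τstar * D r - Nf r) ≤ 0 :=
      mul_nonpos_iff.mpr (Or.inl ⟨by positivity, by linarith⟩)
    have h4 : (n:ℝ)⁻¹ * ((q r)⁻¹ * (τstar * ((C r).card : ℝ) * LC r +
        (((C r).card : ℝ) - τstar) * Lmax r)) ≤ B τstar := by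
      rw [hBform]
      linarith
    calc (q r)⁻¹ * (τstar * ((C r).card : ℝ) * LC r + (((C r).card : ℝ) - τstar) * Lmax r)
        = (n:ℝ) * ((n:ℝ)⁻¹ * ((q r)⁻¹ * (τstar * ((C r).card : ℝ) * LC r +
            (((C r).card : ℝ) - τstar) * Lmax r))) := by
          rw [← mul_assoc, mul_inv_cancel₀ hnne, one_mul]
      _ ≤ (n:ℝ) * B τstar := mul_le_mul_of_nonneg_left h4 hnR.le
  have hmaxτ : max (A τstar) (B τstar) = B τstar := max_eq_right hAB
  rcases le_total t τstar with hts | hst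
  · have hBmono : B τstar ≤ B t := by
      rw [hBform, hBform]
      have h0 : (0:ℝ) ≤ c * ((n:ℝ)^2)⁻¹ := by positivity
      have h1 : (τstar - t) * S1 ≤ 0 :=
        mul_nonpos_iff.mpr (Or.inl ⟨by linarith, hS1⟩)
      nlinarith [mul_nonpos_iff.mpr (Or.inl ⟨h0, h1⟩)]
    rw [hmaxτ]
    exact hBmono.trans (le_max_right _ _)
  · obtain ⟨r0, -, hr0⟩ := Finset.exists_mem_eq_inf' hne τf
    have hτ0 : τstar = τf r0 := by rw [hτeq, hr0]
    have h2 : τstar * D r0 = Nf r0 := by rw [hτ0]; exact hcross r0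
    have h3 : ((n:ℝ)^2)⁻¹ * (τstar * D r0 - Nf r0) = 0 := by
      rw [h2, sub_self, mul_zero]
    have h1 := hkey r0 τstar
    have heq : B τstar = (n:ℝ)⁻¹ * ((q r0)⁻¹ * (τstar * ((C r0).card : ℝ) * LC r0 +
        (((C r0).card : ℝ) - τstar) * Lmax r0)) := by
      rw [hBform]
      linarith
    have hmono : (n:ℝ)⁻¹ * ((q r0)⁻¹ * (τstar * ((C r0).card : ℝ) * LC r0 +
        (((C r0).card : ℝ) - τstar) * Lmax r0))
        ≤ (n:ℝ)⁻¹ * ((q r0)⁻¹ * (t * ((C r0).card : ℝ) * LC r0 +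
        (((C r0).card : ℝ) - t) * Lmax r0)) := by
      refine mul_le_mul_of_nonneg_left ?_ (inv_nonneg.mpr hnR.le)
      refine mul_le_mul_of_nonneg_left ?_ (inv_nonneg.mpr (hq r0).le)
      nlinarith [mul_nonneg (sub_nonneg.mpr hst) (hα r0).le]
    have hAt : (n:ℝ)⁻¹ * ((q r0)⁻¹ * (t * ((C r0).card : ℝ) * LC r0 +
        (((C r0).card : ℝ) - t) * Lmax r0)) ≤ A t := by
      rw [hA t]
      exact mul_le_mul_of_nonneg_left
        (Finset.le_sup' (fun r => (q r)⁻¹ * (t * ((C r).card : ℝ) * LC r +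
          (((C r).card : ℝ) - t) * Lmax r)) (Finset.mem_univ r0))
        (inv_nonneg.mpr hnR.le)
    rw [hmaxτ, heq]
    exact (hmono.trans hAt).trans (le_max_left _ _)
end

section
/- One-step contraction of SGD (key step in the proof of Theorem 3): let f : ℝ^d → ℝ be differentiable and μ-strongly convex with minimizer x*, let (Ω, P) be a probability space and g : Ω → ℝ^d a square-integrable random vector with ∫ g dP = ∇f(x) and ∫ ‖g‖² dP ≤ 4𝓛·(f(x) − f(x*)) + 2σ, where 𝓛 > 0 and σ ≥ 0. If 0 < γ ≤ 1/(2𝓛), then ∫ ‖x − γ·g(ω) − x*‖² dP(ω) ≤ (1 − γμ)·‖x − x*‖² + 2γ²σ. -/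
/-!
Expanding the square, the mean of the cross term is `⟪x - x*, ∇f x⟫`, which strong convexity
bounds below by `f x - f x* + μ/2 ‖x - x*‖²`. The second-moment bound costs
`4γ²𝓛 (f x - f x*)`, and the step-size condition `2γ𝓛 ≤ 1` makes the gain `2γ (f x - f x*)`
absorb it.
-/

open MeasureTheory RealInnerProductSpace

section

variable {E Ω : Type*} [NormedAddCommGroup E] [InnerProductSpace ℝ E]

theorem integral_norm_sub_smul_sq [CompleteSpace E] [MeasurableSpace Ω] {P : Measure Ω}
    [IsProbabilityMeasure P] {g : Ω → E} (hg : MemLp g 2 P) (v : E) (γ : ℝ) :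
    ∫ ω, ‖v - γ • g ω‖ ^ 2 ∂P
      = ‖v‖ ^ 2 - 2 * γ * ⟪v, ∫ ω, g ω ∂P⟫ + γ ^ 2 * ∫ ω, ‖g ω‖ ^ 2 ∂P := by
  have hg_int : Integrable g P := hg.integrable one_le_two
  have hinner_int : Integrable (fun ω => ⟪v, g ω⟫) P := hg_int.const_inner v
  have hsq_int : Integrable (fun ω => ‖g ω‖ ^ 2) P := hg.norm.integrable_sq
  have hexpand : ∀ ω, ‖v - γ • g ω‖ ^ 2 = ‖v‖ ^ 2 - 2 * γ * ⟪v, g ω⟫ + γ ^ 2 * ‖g ω‖ ^ 2 := by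
    intro ω
    rw [norm_sub_sq_real, real_inner_smul_right, norm_smul, mul_pow, Real.norm_eq_abs, sq_abs]
    ring
  simp_rw [hexpand]
  rw [integral_add (by exact (integrable_const _).sub (hinner_int.const_mul _))
      (hsq_int.const_mul _), integral_sub (integrable_const _) (hinner_int.const_mul _),
    integral_const, integral_const_mul, integral_const_mul, integral_inner hg_int, probReal_univ,
    one_smul]

theorem le_inner_sub_of_strongConvex_lower_bound {f : E → ℝ} {gz z w : E} {μ : ℝ}
    (h : f w ≥ f z + ⟪gz, w - z⟫ + μ / 2 * ‖w - z‖ ^ 2) :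
    f z - f w + μ / 2 * ‖z - w‖ ^ 2 ≤ ⟪z - w, gz⟫ := by
  rw [← neg_sub z w, inner_neg_right, real_inner_comm, norm_neg] at h
  linarith

end

theorem stmt9_general {d : ℕ} {Ω : Type*} [MeasurableSpace Ω]
    (P : Measure Ω) [IsProbabilityMeasure P]
    (f : EuclideanSpace ℝ (Fin d) → ℝ)
    (gf : EuclideanSpace ℝ (Fin d) → EuclideanSpace ℝ (Fin d))
    (μ : ℝ)
    (hsc : ∀ z w, f w ≥ f z + ⟪gf z, w - z⟫ + μ / 2 * ‖w - z‖ ^ 2)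
    (xstar : EuclideanSpace ℝ (Fin d)) (hmin : ∀ z, f xstar ≤ f z)
    (x : EuclideanSpace ℝ (Fin d))
    (g : Ω → EuclideanSpace ℝ (Fin d))
    (hgL2 : MemLp g 2 P)
    (hmean : ∫ ω, g ω ∂P = gf x)
    (𝓛 σ : ℝ) (h𝓛 : 0 < 𝓛)
    (hsecond : ∫ ω, ‖g ω‖ ^ 2 ∂P ≤ 4 * 𝓛 * (f x - f xstar) + 2 * σ)
    (γ : ℝ) (hγ0 : 0 < γ) (hγ : γ ≤ 1 / (2 * 𝓛)) :
    ∫ ω, ‖x - γ • g ω - xstar‖ ^ 2 ∂P ≤ (1 - γ * μ) * ‖x - xstar‖ ^ 2 + 2 * γ ^ 2 * σ := by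
  have hgap : 0 ≤ f x - f xstar := sub_nonneg.mpr (hmin x)
  have hstep : 0 ≤ 1 - 2 * γ * 𝓛 := by
    rw [le_div_iff₀ (by positivity)] at hγ
    linarith
  have hinner := le_inner_sub_of_strongConvex_lower_bound (hsc x xstar)
  simp_rw [sub_right_comm x _ xstar]
  calc ∫ ω, ‖x - xstar - γ • g ω‖ ^ 2 ∂P
      = ‖x - xstar‖ ^ 2 - 2 * γ * ⟪x - xstar, gf x⟫ + γ ^ 2 * ∫ ω, ‖g ω‖ ^ 2 ∂P := by
        rw [integral_norm_sub_smul_sq hgL2, hmean]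
    _ ≤ ‖x - xstar‖ ^ 2 - 2 * γ * (f x - f xstar + μ / 2 * ‖x - xstar‖ ^ 2)
          + γ ^ 2 * (4 * 𝓛 * (f x - f xstar) + 2 * σ) := by gcongr
    _ = (1 - γ * μ) * ‖x - xstar‖ ^ 2 + 2 * γ ^ 2 * σ
          - 2 * γ * (1 - 2 * γ * 𝓛) * (f x - f xstar) := by ring
    _ ≤ (1 - γ * μ) * ‖x - xstar‖ ^ 2 + 2 * γ ^ 2 * σ := sub_le_self _ (by positivity)

/-- One-step contraction of SGD (key step in the proof of Theorem 3). -/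
theorem stmt9 {d : ℕ} {Ω : Type*} [MeasurableSpace Ω]
    (P : Measure Ω) [IsProbabilityMeasure P]
    (f : EuclideanSpace ℝ (Fin d) → ℝ)
    (gf : EuclideanSpace ℝ (Fin d) → EuclideanSpace ℝ (Fin d))
    (hgrad : ∀ z, HasGradientAt f (gf z) z)
    (μ : ℝ) (hμ : 0 < μ)
    (hsc : ∀ z w, f w ≥ f z + ⟪gf z, w - z⟫ + μ / 2 * ‖w - z‖ ^ 2)
    (xstar : EuclideanSpace ℝ (Fin d)) (hmin : ∀ z, f xstar ≤ f z)
    (x : EuclideanSpace ℝ (Fin d))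
    (g : Ω → EuclideanSpace ℝ (Fin d))
    (hgL2 : MemLp g 2 P)
    (hmean : ∫ ω, g ω ∂P = gf x)
    (𝓛 σ : ℝ) (h𝓛 : 0 < 𝓛) (hσ : 0 ≤ σ)
    (hsecond : ∫ ω, ‖g ω‖ ^ 2 ∂P ≤ 4 * 𝓛 * (f x - f xstar) + 2 * σ)
    (γ : ℝ) (hγ0 : 0 < γ) (hγ : γ ≤ 1 / (2 * 𝓛)) :
    ∫ ω, ‖x - γ • g ω - xstar‖ ^ 2 ∂P ≤ (1 - γ * μ) * ‖x - xstar‖ ^ 2 + 2 * γ ^ 2 * σ :=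
  stmt9_general P f gf μ hsc xstar hmin x g hgL2 hmean 𝓛 σ h𝓛 hsecond γ hγ0 hγ
end

section
/- Iteration complexity of SGD with the optimal fixed step size (Theorem 1, deterministic core): let μ, 𝓛, σ, ε > 0 with 𝓛 ≥ μ, set γ := (1/2)·min{1/𝓛, εμ/(2σ)}, and let (r_k)_{k≥0} be nonnegative reals with r_0 > 0 satisfying r_{k+1} ≤ (1 − γμ)·r_k + 2γ²σ for all k. Then for every natural number k with k ≥ (2/μ)·max{𝓛, 2σ/(εμ)}·log(2·r_0/ε), one has r_k ≤ ε. -/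
/-- Iteration complexity of SGD with the optimal fixed step size
(Theorem 1, deterministic core). -/
theorem stmt11 (μ 𝓛 σ ε : ℝ) (hμ : 0 < μ) (h𝓛 : 0 < 𝓛) (hσ : 0 < σ) (hε : 0 < ε)
    (h𝓛μ : μ ≤ 𝓛)
    (γ : ℝ) (hγ : γ = 2⁻¹ * min (1 / 𝓛) (ε * μ / (2 * σ)))
    (r : ℕ → ℝ) (hrnn : ∀ k, 0 ≤ r k) (hr0 : 0 < r 0)
    (hrec : ∀ k, r (k + 1) ≤ (1 - γ * μ) * r k + 2 * γ ^ 2 * σ) :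
    ∀ k : ℕ, 2 / μ * max 𝓛 (2 * σ / (ε * μ)) * Real.log (2 * r 0 / ε) ≤ (k : ℝ) →
      r k ≤ ε := by
  intro k hk
  set M := max 𝓛 (2 * σ / (ε * μ)) with hM
  have hM0 : 0 < M := lt_of_lt_of_le h𝓛 (le_max_left _ _)
  have hγeq : γ = (2 * M)⁻¹ := by
    rcases le_total 𝓛 (2 * σ / (ε * μ)) with h | h
    · have hMe : M = 2 * σ / (ε * μ) := max_eq_right h
      have h' : 𝓛 * (ε * μ) ≤ 2 * σ := (le_div_iff₀ (by positivity)).mp h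
      have hmin : min (1 / 𝓛) (ε * μ / (2 * σ)) = ε * μ / (2 * σ) := by
        apply min_eq_right
        rw [div_le_div_iff₀ (by positivity) h𝓛]
        nlinarith
      rw [hγ, hmin, hMe]
      field_simp
    · have hMe : M = 𝓛 := max_eq_left h
      have h' : 2 * σ ≤ 𝓛 * (ε * μ) := (div_le_iff₀ (by positivity)).mp h
      have hmin : min (1 / 𝓛) (ε * μ / (2 * σ)) = 1 / 𝓛 := by
        apply min_eq_left
        rw [div_le_div_iff₀ h𝓛 (by positivity)]
        nlinarith
      rw [hγ, hmin, hMe]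
      field_simp
  have hγ0 : 0 < γ := by rw [hγeq]; positivity
  have hγμ1 : γ * μ ≤ 1 / 2 := by
    have hμM : μ ≤ M := le_trans h𝓛μ (le_max_left _ _)
    rw [hγeq, inv_mul_le_iff₀ (by positivity)]
    nlinarith
  have h1 : 0 ≤ 1 - γ * μ := by linarith
  have h1' : 1 - γ * μ ≤ Real.exp (-(γ * μ)) := by
    have := Real.add_one_le_exp (-(γ * μ)); linarith
  have hγle : γ ≤ ε * μ / (4 * σ) := by
    have h2 : 2 * (2 * σ / (ε * μ)) ≤ 2 * M := by
      have := le_max_right 𝓛 (2 * σ / (ε * μ)); linarith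
    have h3 : γ ≤ (2 * (2 * σ / (ε * μ)))⁻¹ := by
      rw [hγeq]
      exact inv_anti₀ (by positivity) h2
    have h4 : (2 * (2 * σ / (ε * μ)))⁻¹ = ε * μ / (4 * σ) := by
      field_simp; ring
    linarith [h4 ▸ h3]
  set c : ℝ := 2 * γ * σ / μ with hc
  have hc0 : 0 ≤ c := by positivity
  have hcε : c ≤ ε / 2 := by
    rw [hc, div_le_div_iff₀ hμ (by norm_num)]
    have := (le_div_iff₀ (show (0:ℝ) < 4 * σ by positivity)).mp hγle
    nlinarith
  have hfix : (1 - γ * μ) * c + 2 * γ ^ 2 * σ = c := by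
    rw [hc]; field_simp; ring
  have key : ∀ n, r n ≤ (1 - γ * μ) ^ n * r 0 + c := by
    intro n
    induction n with
    | zero => simpa using by linarith
    | succ n ih =>
      calc r (n + 1) ≤ (1 - γ * μ) * r n + 2 * γ ^ 2 * σ := hrec n
        _ ≤ (1 - γ * μ) * ((1 - γ * μ) ^ n * r 0 + c) + 2 * γ ^ 2 * σ := by
            nlinarith [mul_le_mul_of_nonneg_left ih h1]
        _ = (1 - γ * μ) ^ (n + 1) * r 0 + ((1 - γ * μ) * c + 2 * γ ^ 2 * σ) := by ring
        _ = (1 - γ * μ) ^ (n + 1) * r 0 + c := by rw [hfix]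
  have hpow : (1 - γ * μ) ^ k ≤ Real.exp (-(γ * μ * k)) := by
    calc (1 - γ * μ) ^ k ≤ (Real.exp (-(γ * μ))) ^ k := pow_le_pow_left₀ h1 h1' k
      _ = Real.exp (-(γ * μ * k)) := by rw [← Real.exp_nat_mul]; ring_nf
  have hlog : Real.log (2 * r 0 / ε) ≤ γ * μ * k := by
    have heq : γ * μ * (2 / μ * M * Real.log (2 * r 0 / ε)) = Real.log (2 * r 0 / ε) := by
      rw [hγeq]; field_simp
    have := mul_le_mul_of_nonneg_left hk (le_of_lt (mul_pos hγ0 hμ))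
    calc Real.log (2 * r 0 / ε)
        = γ * μ * (2 / μ * M * Real.log (2 * r 0 / ε)) := heq.symm
      _ ≤ γ * μ * k := this
  have hpos : (0:ℝ) < 2 * r 0 / ε := by positivity
  have hexp : Real.exp (-(γ * μ * k)) ≤ ε / (2 * r 0) := by
    calc Real.exp (-(γ * μ * k)) ≤ Real.exp (-Real.log (2 * r 0 / ε)) :=
          Real.exp_le_exp.mpr (by linarith)
      _ = (2 * r 0 / ε)⁻¹ := by rw [Real.exp_neg, Real.exp_log hpos]
      _ = ε / (2 * r 0) := by rw [inv_div]
  have hfin : (1 - γ * μ) ^ k * r 0 ≤ ε / 2 := by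
    calc (1 - γ * μ) ^ k * r 0 ≤ Real.exp (-(γ * μ * k)) * r 0 :=
          mul_le_mul_of_nonneg_right hpow (hrnn 0)
      _ ≤ (ε / (2 * r 0)) * r 0 := mul_le_mul_of_nonneg_right hexp (hrnn 0)
      _ = ε / 2 := by field_simp
  linarith [key k]
end

section
/- Optimized lower bound on the gradient noise function (Lemma 5, optimal c): let f : ℝ^d → ℝ be differentiable, μ-strongly convex and L-smooth with minimizer x* (so ∇f(x*) = 0), let 𝓛 > 0, μ > 0, L > 0, and for each x ∈ ℝ^d let G_x : Ω → ℝ^d be a square-integrable random vector on a probability space (Ω, P) with ∫ G_x dP = ∇f(x) and ∫ ‖G_x − G_{x*}‖² dP ≤ 2𝓛·(f(x) − f(x*)). Define σ(x) := ∫ ‖G_x‖² dP. Then for every x ∈ ℝ^d, σ(x) ≥ [ (√(𝓛·L + μ²) − √(𝓛·L))² / μ² ] · σ(x*). -/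
/-!
Strong convexity at `x` bounds the gap `f x - f x⋆` by `‖∇f x‖² / (2μ)`, and by Jensen
`‖∇f x‖² = ‖E G_x‖² ≤ σ(x)`; expected smoothness then gives `E‖G_x - G_{x⋆}‖² ≤ (𝓛/μ) σ(x)`.
The triangle inequality in `L²` (in its weighted Peter–Paul form) yields
`σ(x⋆) ≤ (1 + √(𝓛/μ))² σ(x)`. For `x ≠ x⋆`, strong monotonicity and Lipschitz continuity of the
gradient force `μ ≤ L`, and then `(√(𝓛L + μ²) - √(𝓛L)) (1 + √(𝓛/μ)) ≤ μ` because
`√(𝓛L + μ²) - √(𝓛L) = μ² / (√(𝓛L + μ²) + √(𝓛L))`.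
-/

open MeasureTheory RealInnerProductSpace

theorem sq_norm_integral_le_integral_sq_norm {Ω E : Type*} [MeasurableSpace Ω]
    [NormedAddCommGroup E] [NormedSpace ℝ E] [CompleteSpace E]
    {P : Measure Ω} [IsProbabilityMeasure P] {X : Ω → E} (hX : MemLp X 2 P) :
    ‖∫ ω, X ω ∂P‖ ^ 2 ≤ ∫ ω, ‖X ω‖ ^ 2 ∂P :=
  (convexOn_univ_norm.pow (fun _ _ ↦ norm_nonneg _) 2).map_integral_le
    (continuous_norm.pow 2).continuousOn isClosed_univ (by simp) (hX.integrable one_le_two)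
    hX.integrable_norm_pow'

theorem norm_add_sq_le_of_pos {E : Type*} [SeminormedAddCommGroup E] (a b : E) {t : ℝ}
    (ht : 0 < t) : ‖a + b‖ ^ 2 ≤ (1 + t) * ‖a‖ ^ 2 + (1 + t⁻¹) * ‖b‖ ^ 2 := by
  have young : 2 * (‖a‖ * ‖b‖) ≤ t * ‖a‖ ^ 2 + t⁻¹ * ‖b‖ ^ 2 := by
    have key : t * ‖a‖ ^ 2 + t⁻¹ * ‖b‖ ^ 2 - 2 * (‖a‖ * ‖b‖) = (t * ‖a‖ - ‖b‖) ^ 2 / t := by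
      field_simp; ring
    linarith [div_nonneg (sq_nonneg (t * ‖a‖ - ‖b‖)) ht.le]
  nlinarith [norm_add_le a b, norm_nonneg (a + b), norm_nonneg a, norm_nonneg b]

theorem integral_sq_norm_le_of_integral_sq_norm_sub_le {Ω E : Type*} [MeasurableSpace Ω]
    [NormedAddCommGroup E] {P : Measure Ω} {X Y : Ω → E} (hX : MemLp X 2 P) (hY : MemLp Y 2 P)
    {t : ℝ} (ht : 0 < t) (hXY : ∫ ω, ‖X ω - Y ω‖ ^ 2 ∂P ≤ t ^ 2 * ∫ ω, ‖X ω‖ ^ 2 ∂P) :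
    ∫ ω, ‖Y ω‖ ^ 2 ∂P ≤ (1 + t) ^ 2 * ∫ ω, ‖X ω‖ ^ 2 ∂P := by
  have hXi : Integrable (fun ω ↦ ‖X ω‖ ^ 2) P := hX.norm.integrable_sq
  have hXYi : Integrable (fun ω ↦ ‖X ω - Y ω‖ ^ 2) P := (hX.sub hY).norm.integrable_sq
  calc ∫ ω, ‖Y ω‖ ^ 2 ∂P
      ≤ ∫ ω, ((1 + t) * ‖X ω‖ ^ 2 + (1 + t⁻¹) * ‖X ω - Y ω‖ ^ 2) ∂P := by
        refine integral_mono hY.norm.integrable_sq ((hXi.const_mul _).add (hXYi.const_mul _))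
          fun ω ↦ ?_
        simpa [norm_sub_rev] using norm_add_sq_le_of_pos (X ω) (Y ω - X ω) ht
    _ = (1 + t) * ∫ ω, ‖X ω‖ ^ 2 ∂P + (1 + t⁻¹) * ∫ ω, ‖X ω - Y ω‖ ^ 2 ∂P := by
        rw [integral_add (hXi.const_mul _) (hXYi.const_mul _), integral_const_mul,
          integral_const_mul]
    _ ≤ (1 + t) * ∫ ω, ‖X ω‖ ^ 2 ∂P + (1 + t⁻¹) * (t ^ 2 * ∫ ω, ‖X ω‖ ^ 2 ∂P) := by
        gcongr
    _ = (1 + t) ^ 2 * ∫ ω, ‖X ω‖ ^ 2 ∂P := by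
        field_simp; ring

theorem sub_le_sq_norm_div_of_strongConvex_ineq {E : Type*} [NormedAddCommGroup E]
    [InnerProductSpace ℝ E] {a b μ : ℝ} {g v : E} (hμ : 0 < μ)
    (h : b ≥ a + ⟪g, v⟫ + μ / 2 * ‖v‖ ^ 2) : a - b ≤ ‖g‖ ^ 2 / (2 * μ) := by
  have hCS : -(‖g‖ * ‖v‖) ≤ ⟪g, v⟫ := by
    have := abs_real_inner_le_norm g v
    linarith [neg_abs_le ⟪g, v⟫]
  rw [le_div_iff₀ (by positivity)]
  nlinarith [sq_nonneg (‖g‖ - μ * ‖v‖)]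

theorem mul_sq_norm_sub_le_inner_of_strongConvex_ineq {E : Type*} [NormedAddCommGroup E]
    [InnerProductSpace ℝ E] {f : E → ℝ} {gf : E → E} {μ : ℝ}
    (hsc : ∀ z w, f w ≥ f z + ⟪gf z, w - z⟫ + μ / 2 * ‖w - z‖ ^ 2) (x y : E) :
    μ * ‖x - y‖ ^ 2 ≤ ⟪gf x - gf y, x - y⟫ := by
  have hxy := hsc x y
  have hyx := hsc y x
  rw [← neg_sub x y, inner_neg_right, norm_neg] at hxy
  rw [inner_sub_left]
  linarith

theorem le_of_strongMonotone_of_lipschitz {E : Type*} [NormedAddCommGroup E]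
    [InnerProductSpace ℝ E] {g : E → E} {μ L : ℝ} {x y : E} (hxy : x ≠ y)
    (hmono : μ * ‖x - y‖ ^ 2 ≤ ⟪g x - g y, x - y⟫) (hLip : ‖g x - g y‖ ≤ L * ‖x - y‖) :
    μ ≤ L := by
  have hr : 0 < ‖x - y‖ := norm_pos_iff.mpr (sub_ne_zero.mpr hxy)
  have hCS := real_inner_le_norm (g x - g y) (x - y)
  have : μ * ‖x - y‖ ^ 2 ≤ L * ‖x - y‖ ^ 2 := by nlinarith
  exact le_of_mul_le_mul_right this (by positivity)

theorem sqrt_add_sq_sub_sqrt_le (a : ℝ) {b : ℝ} (hb : 0 ≤ b) :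
    √(a + b ^ 2) - √a ≤ b := by
  rcases le_total 0 a with ha | ha
  · rw [sub_le_iff_le_add, Real.sqrt_le_left (by positivity)]
    nlinarith [Real.sq_sqrt ha, Real.sqrt_nonneg a]
  · calc √(a + b ^ 2) - √a = √(a + b ^ 2) := by rw [Real.sqrt_eq_zero_of_nonpos ha, sub_zero]
      _ ≤ √(b ^ 2) := Real.sqrt_le_sqrt (by linarith)
      _ = b := Real.sqrt_sq hb

theorem sqrt_add_sq_sub_sqrt_mul_one_add_sqrt_div_le {c L μ : ℝ} (hc : 0 ≤ c) (hμ : 0 < μ)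
    (hμL : μ ≤ L) : (√(c * L + μ ^ 2) - √(c * L)) * (1 + √(c / μ)) ≤ μ := by
  have hcL : 0 ≤ c * L := mul_nonneg hc (hμ.le.trans hμL)
  have hA : √(c * L) ^ 2 = c * L := Real.sq_sqrt hcL
  have hB : √(c * L + μ ^ 2) ^ 2 = c * L + μ ^ 2 := Real.sq_sqrt (by positivity)
  have hμB : μ ≤ √(c * L + μ ^ 2) := Real.le_sqrt_of_sq_le (by linarith)
  have hμt : μ * √(c / μ) ≤ √(c * L) := by
    refine Real.le_sqrt_of_sq_le ?_
    rw [mul_pow, Real.sq_sqrt (by positivity)]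
    field_simp
    nlinarith
  have hgap : 0 ≤ √(c * L + μ ^ 2) - √(c * L) :=
    sub_nonneg.2 (Real.sqrt_le_sqrt (le_add_of_nonneg_right (sq_nonneg μ)))
  have hprod : (√(c * L + μ ^ 2) - √(c * L)) * (√(c * L + μ ^ 2) + √(c * L)) = μ ^ 2 := by
    nlinarith
  have := mul_le_mul_of_nonneg_left
    (show μ * (1 + √(c / μ)) ≤ √(c * L + μ ^ 2) + √(c * L) by linarith) hgap
  nlinarith

theorem div_sq_mul_le_of_le_sq_mul {k u μ a b : ℝ} (hk : 0 ≤ k) (hu : 0 ≤ u) (hμ : 0 < μ)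
    (hku : k * u ≤ μ) (hab : a ≤ u ^ 2 * b) (hb : 0 ≤ b) : k ^ 2 / μ ^ 2 * a ≤ b := by
  have hku2 : (k * u) ^ 2 ≤ μ ^ 2 := pow_le_pow_left₀ (by positivity) hku 2
  calc k ^ 2 / μ ^ 2 * a ≤ k ^ 2 / μ ^ 2 * (u ^ 2 * b) := by gcongr
    _ = (k * u) ^ 2 / μ ^ 2 * b := by ring
    _ ≤ 1 * b := by gcongr; exact div_le_one_of_le₀ hku2 (by positivity)
    _ = b := one_mul b

theorem stmt13_general {d : ℕ} {Ω : Type*} [MeasurableSpace Ω]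
    (P : Measure Ω) [IsProbabilityMeasure P]
    (f : EuclideanSpace ℝ (Fin d) → ℝ)
    (gf : EuclideanSpace ℝ (Fin d) → EuclideanSpace ℝ (Fin d))
    (μ L 𝓛 : ℝ) (hμ : 0 < μ) (h𝓛 : 0 < 𝓛)
    (hsc : ∀ z w, f w ≥ f z + ⟪gf z, w - z⟫ + μ / 2 * ‖w - z‖ ^ 2)
    (hLip : ∀ z w, ‖gf z - gf w‖ ≤ L * ‖z - w‖)
    (xstar : EuclideanSpace ℝ (Fin d))
    (G : EuclideanSpace ℝ (Fin d) → Ω → EuclideanSpace ℝ (Fin d))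
    (hGL2 : ∀ z, MemLp (G z) 2 P)
    (hmean : ∀ z, ∫ ω, G z ω ∂P = gf z)
    (hES : ∀ z, ∫ ω, ‖G z ω - G xstar ω‖ ^ 2 ∂P ≤ 2 * 𝓛 * (f z - f xstar)) :
    ∀ x : EuclideanSpace ℝ (Fin d),
      (Real.sqrt (𝓛 * L + μ ^ 2) - Real.sqrt (𝓛 * L)) ^ 2 / μ ^ 2 *
          ∫ ω, ‖G xstar ω‖ ^ 2 ∂P ≤
        ∫ ω, ‖G x ω‖ ^ 2 ∂P := by
  intro x
  obtain ⟨u, hu, hgap_u, hσ⟩ : ∃ u, 0 ≤ u ∧ (√(𝓛 * L + μ ^ 2) - √(𝓛 * L)) * u ≤ μ ∧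
      ∫ ω, ‖G xstar ω‖ ^ 2 ∂P ≤ u ^ 2 * ∫ ω, ‖G x ω‖ ^ 2 ∂P := by
    rcases eq_or_ne x xstar with rfl | hne
    · exact ⟨1, zero_le_one, by simpa using sqrt_add_sq_sub_sqrt_le _ hμ.le, by simp⟩
    have hμL : μ ≤ L := le_of_strongMonotone_of_lipschitz hne
      (mul_sq_norm_sub_le_inner_of_strongConvex_ineq hsc x xstar) (hLip x xstar)
    have hdev : ∫ ω, ‖G x ω - G xstar ω‖ ^ 2 ∂P ≤ √(𝓛 / μ) ^ 2 * ∫ ω, ‖G x ω‖ ^ 2 ∂P :=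
      calc ∫ ω, ‖G x ω - G xstar ω‖ ^ 2 ∂P ≤ 2 * 𝓛 * (f x - f xstar) := hES x
        _ ≤ 2 * 𝓛 * (‖gf x‖ ^ 2 / (2 * μ)) := by
          gcongr; exact sub_le_sq_norm_div_of_strongConvex_ineq hμ (hsc x xstar)
        _ ≤ 2 * 𝓛 * ((∫ ω, ‖G x ω‖ ^ 2 ∂P) / (2 * μ)) := by
          gcongr; rw [← hmean x]; exact sq_norm_integral_le_integral_sq_norm (hGL2 x)
        _ = √(𝓛 / μ) ^ 2 * ∫ ω, ‖G x ω‖ ^ 2 ∂P := by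
          rw [Real.sq_sqrt (by positivity)]; field_simp
    exact ⟨1 + √(𝓛 / μ), by positivity,
      sqrt_add_sq_sub_sqrt_mul_one_add_sqrt_div_le h𝓛.le hμ hμL,
      integral_sq_norm_le_of_integral_sq_norm_sub_le (hGL2 x) (hGL2 xstar)
        (Real.sqrt_pos.2 (by positivity)) hdev⟩
  exact div_sq_mul_le_of_le_sq_mul
    (sub_nonneg.2 (Real.sqrt_le_sqrt (le_add_of_nonneg_right (sq_nonneg μ)))) hu hμ hgap_u hσ
    (integral_nonneg fun _ ↦ by positivity)

/-- Optimized lower bound on the gradient noise function (Lemma 5, optimal `c`). -/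
theorem stmt13 {d : ℕ} {Ω : Type*} [MeasurableSpace Ω]
    (P : Measure Ω) [IsProbabilityMeasure P]
    (f : EuclideanSpace ℝ (Fin d) → ℝ)
    (gf : EuclideanSpace ℝ (Fin d) → EuclideanSpace ℝ (Fin d))
    (hgrad : ∀ z, HasGradientAt f (gf z) z)
    (μ L 𝓛 : ℝ) (hμ : 0 < μ) (hL : 0 < L) (h𝓛 : 0 < 𝓛)
    (hsc : ∀ z w, f w ≥ f z + ⟪gf z, w - z⟫ + μ / 2 * ‖w - z‖ ^ 2)
    (hLip : ∀ z w, ‖gf z - gf w‖ ≤ L * ‖z - w‖)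
    (xstar : EuclideanSpace ℝ (Fin d)) (hmin : ∀ z, f xstar ≤ f z)
    (hgrad0 : gf xstar = 0)
    (G : EuclideanSpace ℝ (Fin d) → Ω → EuclideanSpace ℝ (Fin d))
    (hGL2 : ∀ z, MemLp (G z) 2 P)
    (hmean : ∀ z, ∫ ω, G z ω ∂P = gf z)
    (hES : ∀ z, ∫ ω, ‖G z ω - G xstar ω‖ ^ 2 ∂P ≤ 2 * 𝓛 * (f z - f xstar)) :
    ∀ x : EuclideanSpace ℝ (Fin d),
      (Real.sqrt (𝓛 * L + μ ^ 2) - Real.sqrt (𝓛 * L)) ^ 2 / μ ^ 2 *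
          ∫ ω, ‖G xstar ω‖ ^ 2 ∂P ≤
        ∫ ω, ‖G x ω‖ ^ 2 ∂P :=
  stmt13_general P f gf μ L 𝓛 hμ h𝓛 hsc hLip xstar G hGL2 hmean hES
end
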